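/- arXiv:2510.24423 — 9 statements merged into one kernel-verified Lean document; each statement's English description precedes it below -/
import Mathlib

section
/- Let X be a topological space and let 𝒜 be a family of open subsets of X such that (a) for any x, y ∈ X with x ≠ y there exist A, B ∈ 𝒜 with x ∈ A, y ∈ B and A ∩ B = ∅, and (b) for any x ∈ X there exist U ∈ 𝒜 and a compact set C ⊆ X with x ∈ U ⊆ C. Then 𝒜 is a subbasis for the topology of X, i.e., the topology generated by 𝒜 equals the given topology of X. -/
/-!
The topology generated by `𝒜` is coarser than that of `X` and, by (a), Hausdorff. A compact set
of `X` therefore stays compact, hence closed, in the generated topology. Given `V` open in `X` and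
`x ∈ V`, take `U ∈ 𝒜` and a compact `C` with `x ∈ U ⊆ C`; then `U \ (C \ V)` is open in the
generated topology, contains `x` and lies in `V`.
-/

open Topology

namespace TopologicalSpace

variable {X : Type*}

theorem t2Space_generateFrom {𝒜 : Set (Set X)}
    (h𝒜 : ∀ x y : X, x ≠ y → ∃ A ∈ 𝒜, ∃ B ∈ 𝒜, x ∈ A ∧ y ∈ B ∧ A ∩ B = ∅) :
    @T2Space X (generateFrom 𝒜) := by
  let := generateFrom 𝒜
  refine ⟨fun x y hxy => ?_⟩
  obtain ⟨A, hA, B, hB, hxA, hyB, hAB⟩ := h𝒜 x y hxy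
  exact ⟨A, B, .basic A hA, .basic B hB, hxA, hyB, Set.disjoint_iff_inter_eq_empty.mpr hAB⟩

theorem eq_of_le_of_t2Space {t s : TopologicalSpace X} (hle : t ≤ s) [@T2Space X s]
    (hs : ∀ x, ∃ U, IsOpen[s] U ∧ x ∈ U ∧ ∃ C, @IsCompact X t C ∧ U ⊆ C) : t = s := by
  refine le_antisymm hle (TopologicalSpace.le_def.mpr fun V hV => ?_)
  refine @isOpen_iff_forall_mem_open X s V |>.mpr fun x hxV => ?_
  obtain ⟨U, hU, hxU, C, hC, hUC⟩ := hs x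
  have hK : @IsCompact X s (C \ V) := by
    simpa using
      @IsCompact.image X X t s _ id (@IsCompact.diff X t _ _ hC hV) (continuous_id_of_le hle)
  refine ⟨U \ (C \ V), fun y ⟨hyU, hyK⟩ => ?_, hU.sdiff hK.isClosed, hxU, fun h => h.2 hxV⟩
  by_contra hyV
  exact hyK ⟨hUC hyU, hyV⟩

end TopologicalSpace

/-- If a family `𝒜` of open subsets of a topological space `X` separates points by
disjoint members (𝒜-Hausdorffness) and every point has a member of `𝒜` around it
contained in a compact set (𝒜-local compactness), then `𝒜` is a subbasis for the
topology of `X`. -/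
theorem subbasis_of_hausdorff_of_locally_compact
    {X : Type*} [T : TopologicalSpace X] (𝒜 : Set (Set X))
    (hopen : ∀ A ∈ 𝒜, IsOpen A)
    (hHaus : ∀ x y : X, x ≠ y →
      ∃ A ∈ 𝒜, ∃ B ∈ 𝒜, x ∈ A ∧ y ∈ B ∧ A ∩ B = ∅)
    (hLC : ∀ x : X, ∃ U ∈ 𝒜, ∃ C : Set X, IsCompact C ∧ x ∈ U ∧ U ⊆ C) :
    TopologicalSpace.generateFrom 𝒜 = T := by
  have := TopologicalSpace.t2Space_generateFrom hHaus
  refine (TopologicalSpace.eq_of_le_of_t2Space (le_generateFrom hopen) fun x => ?_).symm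
  obtain ⟨U, hU, C, hC, hxU, hUC⟩ := hLC x
  exact ⟨U, .basic U hU, hxU, C, hC, hUC⟩
end

section
/- Let (X,d) be a Lorentzian metric space with no chronological boundary, with topology 𝒯. Then 𝒯 is Hausdorff and locally compact; 𝒯 is the unique topology on X satisfying axiom (ii) (i.e., if 𝒯' is another topology on X for which d is continuous and for every x,y ∈ X and ε > 0 the set I_ε ∩ (closure(I(x,y)) × closure(I(x,y))) is compact, then 𝒯' = 𝒯); and the sets of the form {q : a < d(p,q) < b} ∩ {q : c < d(q,r) < e}, with p, r ∈ X and a, b, c, e ∈ ℝ ∪ {−∞, +∞}, form a subbasis for 𝒯. -/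
open Filter Topology Set

variable {X : Type*}

/-- Axiom (ii) of a Lorentzian metric space, relative to a given topology `T`:
`d` is continuous and, for all `x y` and `ε > 0`, the set
`I_ε ∩ (closure (I(x,y)) × closure (I(x,y)))` is compact. -/
def LMSAxiom2 (T : TopologicalSpace X) (d : X → X → ℝ) : Prop :=
  letI := T
  Continuous (fun p : X × X => d p.1 p.2) ∧
    ∀ x y : X, ∀ ε : ℝ, 0 < ε →
      IsCompact ({p : X × X | ε ≤ d p.1 p.2} ∩
        (closure {z : X | 0 < d x z ∧ 0 < d z y} ×ˢ closure {z : X | 0 < d x z ∧ 0 < d z y}))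

/-- Lorentzian metric space (LMS): `d ≥ 0`, reverse triangle inequality,
axiom (ii) for the topology `T`, and `d` distinguishes points. -/
def IsLMS (T : TopologicalSpace X) (d : X → X → ℝ) : Prop :=
  (∀ x y : X, 0 ≤ d x y) ∧
  (∀ x y z : X, 0 < d x y → 0 < d y z → d x y + d y z ≤ d x z) ∧
  LMSAxiom2 T d ∧
  (∀ x y : X, x ≠ y → ∃ z : X, d x z ≠ d y z ∨ d z x ≠ d z y)

/-- No chronological boundary: `I(X) = X`. -/
def NoBoundary (d : X → X → ℝ) : Prop :=
  ∀ x : X, (∃ p, 0 < d p x) ∧ (∃ q, 0 < d x q)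

/-- Countably generated: some countable set `G` satisfies `I(G) = X`. -/
def CountablyGenerated (d : X → X → ℝ) : Prop :=
  ∃ G : Set X, G.Countable ∧ ∀ x : X, (∃ p ∈ G, 0 < d p x) ∧ (∃ q ∈ G, 0 < d x q)

/-- The causal relation `J` defined from the Lorentzian distance. -/
def Jrel (d : X → X → ℝ) (x y : X) : Prop :=
  ∀ p : X, d p x ≤ d p y ∧ d y p ≤ d x p

/-- Strict causal relation: `x < y`. -/
def CausalLt (d : X → X → ℝ) (x y : X) : Prop :=
  Jrel d x y ∧ x ≠ y

/-- An isocausal curve with parameter domain `S`. -/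
def IsIsocausalOn (T : TopologicalSpace X) (d : X → X → ℝ) (γ : ℝ → X) (S : Set ℝ) : Prop :=
  letI := T
  ContinuousOn γ S ∧ ∀ s ∈ S, ∀ t ∈ S, s < t → CausalLt d (γ s) (γ t)

/-- A maximizing curve on the domain `S`. -/
def MaximizingOn (d : X → X → ℝ) (γ : ℝ → X) (S : Set ℝ) : Prop :=
  ∀ t ∈ S, ∀ t' ∈ S, ∀ t'' ∈ S, t < t' → t' < t'' →
    d (γ t) (γ t') + d (γ t') (γ t'') = d (γ t) (γ t'')

/-- A time function: continuous and strictly increasing on causal pairs. -/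
def IsTimeFunction (T : TopologicalSpace X) (d : X → X → ℝ) (τ : X → ℝ) : Prop :=
  letI := T
  Continuous τ ∧ ∀ x y : X, CausalLt d x y → τ x < τ y

/-!
Continuity of `d` makes every set `{q | a < d p q < b} ∩ {q | c < d q r < e}` open, so the
topology `τ` they generate is coarser than any topology satisfying axiom (ii); `τ` is Hausdorff
because the functions `d x ·` and `d · x` are `τ`-continuous and separate points. Conversely,
without chronological boundary every `x` lies in an open diamond `{u | ε < d p u ∧ ε < d u q}`
whose closed version is compact: for `p' ≪ p` and `q ≪ q'`, the reverse triangle inequality puts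
it inside the projection of `I_ε ∩ (closure I(p',q'))²`. A topology finer than a Hausdorff
topology `τ`, in which every point has a `τ`-open neighbourhood inside a compact set, equals `τ`,
since compact sets are `τ`-closed. So every topology satisfying axiom (ii) equals `τ`.
-/

theorem TopologicalSpace.eq_of_le_of_forall_exists_isCompact {t₁ t₂ : TopologicalSpace X}
    [@T2Space X t₂] (hle : t₁ ≤ t₂)
    (h : ∀ x, ∃ V, IsOpen[t₂] V ∧ x ∈ V ∧ ∃ C, @IsCompact X t₁ C ∧ V ⊆ C) : t₁ = t₂ := by
  refine le_antisymm hle <| TopologicalSpace.le_def.2 fun U hU =>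
    @isOpen_iff_forall_mem_open X t₂ U |>.2 fun x hx => ?_
  obtain ⟨V, hV, hxV, C, hC, hVC⟩ := h x
  have hCU : @IsCompact X t₂ (C \ U) := by
    simpa using
      @IsCompact.image X X t₁ t₂ _ id (@IsCompact.diff X t₁ _ _ hC hU) (continuous_id_of_le hle)
  refine ⟨V \ (C \ U), fun v hv => ?_, @IsOpen.sdiff X _ _ t₂ hV hCU.isClosed, hxV,
    fun hxCU => hxCU.2 hx⟩
  by_contra hvU
  exact hv.2 ⟨hVC hv.1, hvU⟩

namespace LorentzianMetricSpace

variable {d : X → X → ℝ}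

def subbasis (d : X → X → ℝ) : Set (Set X) :=
  {S : Set X | ∃ (p r : X) (a b c e : EReal),
    S = {q : X | (a < (d p q : EReal) ∧ (d p q : EReal) < b) ∧
                 (c < (d q r : EReal) ∧ (d q r : EReal) < e)}}

lemma setOf_mem_subbasis (p r : X) (a b c e : EReal) :
    {q : X | (a < (d p q : EReal) ∧ (d p q : EReal) < b) ∧
      (c < (d q r : EReal) ∧ (d q r : EReal) < e)} ∈ subbasis d :=
  ⟨p, r, a, b, c, e, rfl⟩

lemma pos_trans (htri : ∀ x y z : X, 0 < d x y → 0 < d y z → d x y + d y z ≤ d x z)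
    {x y z : X} (hxy : 0 < d x y) (hyz : 0 < d y z) : 0 < d x z :=
  (add_pos hxy hyz).trans_le (htri x y z hxy hyz)

section Topology

variable [TopologicalSpace X]

lemma isOpen_of_mem_subbasis (hc : Continuous fun p : X × X => d p.1 p.2) {S : Set X}
    (hS : S ∈ subbasis d) : IsOpen S := by
  obtain ⟨p, r, a, b, c, e, rfl⟩ := hS
  exact (isOpen_Ioo.preimage (continuous_coe_real_ereal.comp (hc.uncurry_left p))).inter
    (isOpen_Ioo.preimage (continuous_coe_real_ereal.comp (hc.uncurry_right r)))

lemma le_generateFrom_subbasis (hc : Continuous fun p : X × X => d p.1 p.2) :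
    ‹TopologicalSpace X› ≤ TopologicalSpace.generateFrom (subbasis d) :=
  le_generateFrom fun _ => isOpen_of_mem_subbasis hc

end Topology

section GenerateFrom

open TopologicalSpace

lemma continuous_generateFrom_dist_left (p : X) :
    Continuous[generateFrom (subbasis d), _] (d p) := by
  let := generateFrom (subbasis d)
  refine OrderTopology.continuous_iff.2 fun a => ⟨isOpen_generateFrom_of_mem ?_,
    isOpen_generateFrom_of_mem ?_⟩
  · convert setOf_mem_subbasis p p a ⊤ ⊥ ⊤ using 1
    ext; simp
  · convert setOf_mem_subbasis p p ⊥ a ⊥ ⊤ using 1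
    ext; simp

lemma continuous_generateFrom_dist_right (r : X) :
    Continuous[generateFrom (subbasis d), _] (d · r) := by
  let := generateFrom (subbasis d)
  refine OrderTopology.continuous_iff.2 fun a => ⟨isOpen_generateFrom_of_mem ?_,
    isOpen_generateFrom_of_mem ?_⟩
  · convert setOf_mem_subbasis r r ⊥ ⊤ a ⊤ using 1
    ext; simp
  · convert setOf_mem_subbasis r r ⊥ ⊤ ⊥ a using 1
    ext; simp

lemma t2Space_generateFrom_subbasis
    (hsep : ∀ x y : X, x ≠ y → ∃ z : X, d x z ≠ d y z ∨ d z x ≠ d z y) :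
    @T2Space X (generateFrom (subbasis d)) := by
  let := generateFrom (subbasis d)
  refine T2Space.of_injective_continuous (f := fun x z => (d x z, d z x)) (fun x y hxy => ?_)
    (continuous_pi fun z =>
      (continuous_generateFrom_dist_right z).prodMk (continuous_generateFrom_dist_left z))
  by_contra hne
  obtain ⟨z, hz | hz⟩ := hsep x y hne
  · exact hz congr(($hxy z).1)
  · exact hz congr(($hxy z).2)

end GenerateFrom

variable (htri : ∀ x y z : X, 0 < d x y → 0 < d y z → d x y + d y z ≤ d x z)
include htri

lemma isCompact_setOf_le_dist {t : TopologicalSpace X} (hax : LMSAxiom2 t d)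
    {p' p q q' : X} (hp : 0 < d p' p) (hq : 0 < d q q') {ε : ℝ} (hε : 0 < ε) :
    IsCompact {u | ε ≤ d p u ∧ ε ≤ d u q} := by
  refine ((hax.2 p' q' ε hε).image continuous_snd).of_isClosed_subset
    ((isClosed_le continuous_const (hax.1.uncurry_left p)).inter
      (isClosed_le continuous_const (hax.1.uncurry_right q))) ?_
  rintro u ⟨hpu, huq⟩
  have hpu' : 0 < d p u := hε.trans_le hpu
  have huq' : 0 < d u q := hε.trans_le huq
  exact ⟨(p, u), ⟨hpu, subset_closure ⟨hp, pos_trans htri (pos_trans htri hpu' huq') hq⟩,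
    subset_closure ⟨pos_trans htri hp hpu', pos_trans htri huq' hq⟩⟩, rfl⟩

lemma exists_mem_subbasis_subset_isCompact {t : TopologicalSpace X} (hax : LMSAxiom2 t d)
    (hnb : NoBoundary d) (x : X) :
    ∃ O ∈ subbasis d, x ∈ O ∧ ∃ C, IsCompact C ∧ O ⊆ C := by
  obtain ⟨⟨p, hpx⟩, ⟨q, hxq⟩⟩ := hnb x
  obtain ⟨⟨p', hp'⟩, -⟩ := hnb p
  obtain ⟨-, ⟨q', hq'⟩⟩ := hnb q
  obtain ⟨ε, hε, hεx⟩ := exists_between (lt_min hpx hxq)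
  rw [lt_min_iff] at hεx
  refine ⟨_, setOf_mem_subbasis p q ε ⊤ ε ⊤, ?_, _,
    isCompact_setOf_le_dist htri hax hp' hq' hε, fun u hu => ?_⟩
  · simpa only [mem_ofPred_eq, EReal.coe_lt_coe_iff, EReal.coe_lt_top, and_true] using hεx
  · simp only [mem_ofPred_eq, EReal.coe_lt_coe_iff, EReal.coe_lt_top, and_true] at hu
    exact ⟨hu.1.le, hu.2.le⟩

lemma weaklyLocallyCompactSpace [t : TopologicalSpace X] (hax : LMSAxiom2 t d)
    (hnb : NoBoundary d) : WeaklyLocallyCompactSpace X where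
  exists_compact_mem_nhds x :=
    let ⟨_, hO, hxO, C, hC, hOC⟩ := exists_mem_subbasis_subset_isCompact htri hax hnb x
    ⟨C, hC, mem_of_superset ((isOpen_of_mem_subbasis hax.1 hO).mem_nhds hxO) hOC⟩

lemma generateFrom_subbasis_eq {t : TopologicalSpace X} (hax : LMSAxiom2 t d)
    (hsep : ∀ x y : X, x ≠ y → ∃ z : X, d x z ≠ d y z ∨ d z x ≠ d z y) (hnb : NoBoundary d) :
    TopologicalSpace.generateFrom (subbasis d) = t := by
  have := t2Space_generateFrom_subbasis hsep
  refine (TopologicalSpace.eq_of_le_of_forall_exists_isCompact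
    (le_generateFrom_subbasis hax.1) fun x => ?_).symm
  obtain ⟨O, hO, hxO, C, hC, hOC⟩ := exists_mem_subbasis_subset_isCompact htri hax hnb x
  exact ⟨O, TopologicalSpace.isOpen_generateFrom_of_mem hO, hxO, C, hC, hOC⟩

end LorentzianMetricSpace

/-- Uniqueness and characterization of the topology of a Lorentzian metric space
with no chronological boundary: the topology is Hausdorff, locally compact,
unique among topologies satisfying axiom (ii), and the sets
`{q | a < d p q < b} ∩ {q | c < d q r < e}` (with extended-real bounds)
form a subbasis for it. -/
theorem lms_topology_unique_and_subbasis
    (T : TopologicalSpace X) (d : X → X → ℝ)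
    (h : IsLMS T d) (hnb : NoBoundary d) :
    letI := T
    T2Space X ∧ LocallyCompactSpace X ∧
    (∀ T' : TopologicalSpace X, LMSAxiom2 T' d → T' = T) ∧
    TopologicalSpace.generateFrom
      {S : Set X | ∃ (p r : X) (a b c e : EReal),
        S = {q : X | (a < (d p q : EReal) ∧ (d p q : EReal) < b) ∧
                     (c < (d q r : EReal) ∧ (d q r : EReal) < e)}} = T := by
  obtain ⟨-, htri, hax, hsep⟩ := h
  have hgen : ∀ t, LMSAxiom2 t d →
      TopologicalSpace.generateFrom (LorentzianMetricSpace.subbasis d) = t :=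
    fun t ht => LorentzianMetricSpace.generateFrom_subbasis_eq htri ht hsep hnb
  have : T2Space X := hgen T hax ▸ LorentzianMetricSpace.t2Space_generateFrom_subbasis hsep
  have := LorentzianMetricSpace.weaklyLocallyCompactSpace htri hax hnb
  exact ⟨‹_›, inferInstance, fun T' hT' => (hgen T' hT').symm.trans (hgen T hax), hgen T hax⟩
end

section
/- Let (X,d_X) and (Y,d_Y) be Lorentzian metric spaces with no chronological boundary, and let φ : X → Y be a bijective map such that d_Y(φ(x), φ(x')) = d_X(x, x') for all x, x' ∈ X. Then φ is a homeomorphism between the topologies of X and Y. -/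
open Filter Topology Set

variable {X : Type*}

/-! The topology of a Lorentzian metric space without chronological boundary is the initial
topology of the functions `d z ·` and `d · z`. Indeed, choosing `p`, `q`, `a` with
`d p x, d x q, d a p > 0`, the set `{y | d p x / 2 < d p y ∧ 0 < d y q}` is a neighbourhood of `x`
in that initial topology and, by the reverse triangle inequality, lies in
`{y | d p x / 2 ≤ d p y} ∩ closure I(a, q)`, which is compact by axiom (ii). On a compact set the
continuous injection `x ↦ (d · x, d x ·)` into a Hausdorff space is a closed map, which forces the
two topologies to agree. A bijection preserving `d` pulls these functions back to each other, so it
is continuous in both directions. -/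

theorem Continuous.isInducing_of_isCompact_mem_comap {Z : Type*} [TopologicalSpace X]
    [TopologicalSpace Z] [T2Space Z] {f : X → Z} (hf : Continuous f) (hinj : Function.Injective f)
    (hK : ∀ x, ∃ K, IsCompact K ∧ K ∈ comap f (𝓝 (f x))) : IsInducing f := by
  refine isInducing_iff_nhds.2 fun x => le_antisymm (hf.tendsto x).le_comap fun U hU => ?_
  obtain ⟨V, hVU, hVo, hxV⟩ := mem_nhds_iff.1 hU
  obtain ⟨K, hKc, W, hW, hWK⟩ := hK x
  have hfx : f x ∉ f '' (K \ V) := fun ⟨y, hy, hyx⟩ => hy.2 (hinj hyx ▸ hxV)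
  have hclosed : IsClosed (f '' (K \ V)) := ((hKc.diff hVo).image hf).isClosed
  refine ⟨W ∩ (f '' (K \ V))ᶜ, inter_mem hW (hclosed.compl_mem_nhds hfx), ?_⟩
  rintro y ⟨hyW, hyK⟩
  by_contra hyU
  exact hyK ⟨y, ⟨hWK hyW, fun hyV => hyU (hVU hyV)⟩, rfl⟩

def timeSepProfile (d : X → X → ℝ) (x : X) : (X → ℝ) × (X → ℝ) :=
  (fun z => d z x, fun z => d x z)

namespace IsLMS

variable [T : TopologicalSpace X] {d : X → X → ℝ}

theorem continuous_dist (h : IsLMS T d) : Continuous fun p : X × X => d p.1 p.2 :=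
  h.2.2.1.1

theorem continuous_timeSepProfile (h : IsLMS T d) : Continuous (timeSepProfile d) :=
  (continuous_pi fun _ => h.continuous_dist.comp (continuous_const.prodMk continuous_id)).prodMk
    (continuous_pi fun _ => h.continuous_dist.comp (continuous_id.prodMk continuous_const))

theorem injective_timeSepProfile (h : IsLMS T d) : Function.Injective (timeSepProfile d) := by
  obtain ⟨-, -, -, hsep⟩ := h
  intro x y hxy
  by_contra hne
  obtain ⟨z, hz | hz⟩ := hsep x y hne
  · exact hz (congrFun (congrArg Prod.snd hxy) z)
  · exact hz (congrFun (congrArg Prod.fst hxy) z)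

theorem isCompact_le_dist_inter_closure (h : IsLMS T d) {a p q : X} (hap : 0 < d a p)
    (hpq : 0 < d p q) {ε : ℝ} (hε : 0 < ε) :
    IsCompact ({y | ε ≤ d p y} ∩ closure {z | 0 < d a z ∧ 0 < d z q}) := by
  obtain ⟨-, -, ⟨hcont, hcomp⟩, -⟩ := h
  have hp : p ∈ closure {z | 0 < d a z ∧ 0 < d z q} := subset_closure ⟨hap, hpq⟩
  have hclosed : IsClosed ({y | ε ≤ d p y} ∩ closure {z | 0 < d a z ∧ 0 < d z q}) :=
    (isClosed_le continuous_const (hcont.comp (continuous_const.prodMk continuous_id))).inter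
      isClosed_closure
  refine ((hcomp a q ε hε).image continuous_snd).of_isClosed_subset hclosed ?_
  rintro y ⟨hy, hycl⟩
  exact ⟨(p, y), ⟨hy, hp, hycl⟩, rfl⟩

theorem exists_isCompact_mem_comap_nhds (h : IsLMS T d) (hnb : NoBoundary d) (x : X) :
    ∃ K, IsCompact K ∧ K ∈ comap (timeSepProfile d) (𝓝 (timeSepProfile d x)) := by
  have htri := h.2.1
  obtain ⟨⟨p, hpx⟩, q, hxq⟩ := hnb x
  obtain ⟨a, hap⟩ := (hnb p).1
  have hpq : 0 < d p q := by linarith [htri p x q hpx hxq]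
  refine ⟨_, h.isCompact_le_dist_inter_closure hap hpq (half_pos hpx),
    {g | d p x / 2 < g.1 p ∧ 0 < g.2 q}, ?_, ?_⟩
  · refine IsOpen.mem_nhds ?_ ⟨half_lt_self hpx, hxq⟩
    exact (isOpen_lt continuous_const ((continuous_apply p).comp continuous_fst)).inter
      (isOpen_lt continuous_const ((continuous_apply q).comp continuous_snd))
  · rintro y ⟨hpy : d p x / 2 < d p y, hyq : 0 < d y q⟩
    have hpy' : 0 < d p y := by linarith
    exact ⟨hpy.le, subset_closure ⟨by linarith [htri a p y hap hpy'], hyq⟩⟩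

theorem isInducing_timeSepProfile (h : IsLMS T d) (hnb : NoBoundary d) :
    IsInducing (timeSepProfile d) :=
  h.continuous_timeSepProfile.isInducing_of_isCompact_mem_comap h.injective_timeSepProfile
    (h.exists_isCompact_mem_comap_nhds hnb)

end IsLMS

theorem continuous_of_dist_eq {Y : Type*} [TopologicalSpace X] [TY : TopologicalSpace Y]
    {dX : X → X → ℝ} {dY : Y → Y → ℝ} (hdX : Continuous fun p : X × X => dX p.1 p.2)
    (hY : IsLMS TY dY) (hnbY : NoBoundary dY) {φ : X → Y} (hφ : Function.Surjective φ)
    (hiso : ∀ x x' : X, dY (φ x) (φ x') = dX x x') : Continuous φ := by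
  rw [(hY.isInducing_timeSepProfile hnbY).continuous_iff]
  refine (continuous_pi fun w => ?_).prodMk (continuous_pi fun w => ?_) <;>
    obtain ⟨u, rfl⟩ := hφ w
  · simp only [hiso]
    exact hdX.comp (continuous_const.prodMk continuous_id)
  · simp only [hiso]
    exact hdX.comp (continuous_id.prodMk continuous_const)

/-- A bijective distance-preserving map between Lorentzian metric spaces without
chronological boundary is a homeomorphism. -/
theorem lms_isometry_is_homeomorphism
    {Y : Type*} (TX : TopologicalSpace X) (TY : TopologicalSpace Y)
    (dX : X → X → ℝ) (dY : Y → Y → ℝ)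
    (hX : IsLMS TX dX) (hY : IsLMS TY dY)
    (hnbX : NoBoundary dX) (hnbY : NoBoundary dY)
    (φ : X → Y) (hbij : Function.Bijective φ)
    (hiso : ∀ x x' : X, dY (φ x) (φ x') = dX x x') :
    letI := TX
    letI := TY
    Continuous φ ∧ IsOpenMap φ := by
  let e := Equiv.ofBijective φ hbij
  have hiso_symm : ∀ y y' : Y, dX (e.symm y) (e.symm y') = dY y y' := fun y y' => by
    rw [← hiso, Equiv.ofBijective_apply_symm_apply φ hbij,
      Equiv.ofBijective_apply_symm_apply φ hbij]
  let h : X ≃ₜ Y :=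
    { e with
      continuous_toFun := continuous_of_dist_eq hX.continuous_dist hY hnbY hbij.2 hiso
      continuous_invFun :=
        continuous_of_dist_eq hY.continuous_dist hX hnbX e.symm.surjective hiso_symm }
  exact ⟨h.continuous, h.isOpenMap⟩
end

section
/- Let (X,d) be a countably generated Lorentzian prelength space (with no chronological boundary). Let γ : [0,b) → X with b < ∞ be an isocausal curve possessing a future endpoint p (i.e. γ(t) → p as t → b⁻). Then γ is the restriction of a future inextendible isocausal curve: there exist c ∈ (b, ∞] and an isocausal curve γ̃ : [0,c) → X with no future endpoint such that γ̃(t) = γ(t) for all t ∈ [0,b). -/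
open Filter Topology Set

variable {X : Type*}

/-- Prelength space: any two chronologically related points are connected by an
isocausal curve. -/
def IsPrelength (T : TopologicalSpace X) (d : X → X → ℝ) : Prop :=
  ∀ x y : X, 0 < d x y → ∃ a b : ℝ, a < b ∧ ∃ σ : ℝ → X,
    IsIsocausalOn T d σ (Set.Icc a b) ∧ σ a = x ∧ σ b = y


/-!
Close `γ` off at its endpoint `p` and continue it by segments on `[b + n, b + n + 1]`, each one
provided by the prelength property. Enumerating the countable generating set as `f 0, f 1, …`,
the `n`-th segment is routed through `f n` whenever `f n` lies in the chronological future of its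
starting point `x n`. If the extended curve had a future endpoint `q`, pick `f k ∈ I⁺(q)`; since
`x k ≤ q`, also `f k ∈ I⁺(x k)`, so the curve passes through `f k` and `q ∈ I⁺(f k)`. The reverse
triangle inequality then gives `d q q ≥ d q (f k) + d (f k) q > 0`, which it forbids.
-/

def DistinguishesPoints (d : X → X → ℝ) : Prop :=
  ∀ x y : X, x ≠ y → ∃ z : X, d x z ≠ d y z ∨ d z x ≠ d z y

def ReverseTriangle (d : X → X → ℝ) : Prop :=
  ∀ x y z : X, 0 < d x y → 0 < d y z → d x y + d y z ≤ d x z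

section Causal

variable {d : X → X → ℝ}

lemma Jrel.refl (x : X) : Jrel d x x := fun _ => ⟨le_rfl, le_rfl⟩

lemma Jrel.trans {x y z : X} (h₁ : Jrel d x y) (h₂ : Jrel d y z) : Jrel d x z :=
  fun q => ⟨(h₁ q).1.trans (h₂ q).1, (h₂ q).2.trans (h₁ q).2⟩

lemma Jrel.antisymm (hsep : DistinguishesPoints d) {x y : X} (h₁ : Jrel d x y)
    (h₂ : Jrel d y x) : x = y := by
  by_contra hne
  obtain ⟨z, hz | hz⟩ := hsep x y hne
  · exact hz (le_antisymm (h₂ z).2 (h₁ z).2)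
  · exact hz (le_antisymm (h₁ z).1 (h₂ z).1)

lemma jrel_of_forall_jrel_succ {x : ℕ → X} (hx : ∀ n, Jrel d (x n) (x (n + 1))) {m n : ℕ}
    (hmn : m ≤ n) : Jrel d (x m) (x n) := by
  induction n, hmn using Nat.le_induction with
  | base => exact Jrel.refl _
  | succ n _ ih => exact ih.trans (hx n)

lemma CausalLt.trans_jrel (hsep : DistinguishesPoints d) {x y z : X} (h₁ : CausalLt d x y)
    (h₂ : Jrel d y z) : CausalLt d x z := by
  refine ⟨h₁.1.trans h₂, fun hxz => ?_⟩
  subst hxz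
  exact h₁.2 (h₁.1.antisymm hsep h₂)

lemma CausalLt.trans (hsep : DistinguishesPoints d) {x y z : X} (h₁ : CausalLt d x y)
    (h₂ : CausalLt d y z) : CausalLt d x z :=
  h₁.trans_jrel hsep h₂.1

lemma not_pos_self (htri : ReverseTriangle d) (x : X) : ¬ 0 < d x x :=
  fun h => by linarith [htri x x x h h]

variable [TopologicalSpace X]

lemma jrel_of_tendsto (hcont : Continuous fun q : X × X => d q.1 q.2)
    {ι : Type*} {l : Filter ι} [l.NeBot] {f : ι → X} {x p : X}
    (hf : ∀ᶠ i in l, Jrel d x (f i)) (hp : Tendsto f l (𝓝 p)) : Jrel d x p := by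
  intro r
  have hdr : Continuous fun z : X => d r z := hcont.comp (continuous_const.prodMk continuous_id)
  have hdl : Continuous fun z : X => d z r := hcont.comp (continuous_id.prodMk continuous_const)
  exact ⟨ge_of_tendsto ((hdr.tendsto p).comp hp) (hf.mono fun i hi => (hi r).1),
    le_of_tendsto ((hdl.tendsto p).comp hp) (hf.mono fun i hi => (hi r).2)⟩

lemma not_tendsto_of_forall_passes (htri : ReverseTriangle d)
    (hcont : Continuous fun q : X × X => d q.1 q.2) {f : ℕ → X} (hf : ∀ q, ∃ k, 0 < d q (f k))
    {x : ℕ → X} (hx : ∀ n, Jrel d (x n) (x (n + 1)))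
    (hpass : ∀ n, 0 < d (x n) (f n) → 0 < d (f n) (x (n + 1))) (q : X) :
    ¬ Tendsto x atTop (𝓝 q) := by
  intro hq
  have hxq : ∀ n, Jrel d (x n) q := fun n =>
    jrel_of_tendsto hcont ((eventually_ge_atTop n).mono fun _ => jrel_of_forall_jrel_succ hx) hq
  obtain ⟨k, hk⟩ := hf q
  have hkq : 0 < d (f k) q :=
    (hpass k (hk.trans_le (hxq k (f k)).2)).trans_le (hxq (k + 1) (f k)).1
  exact not_pos_self htri q (by linarith [htri q (f k) q hk hkq])

end Causal

lemma CountablyGenerated.exists_seq_future {d : X → X → ℝ} [Nonempty X]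
    (hcg : CountablyGenerated d) : ∃ f : ℕ → X, ∀ x, ∃ k, 0 < d x (f k) := by
  obtain ⟨G, hGc, hG⟩ := hcg
  obtain ⟨x⟩ := ‹Nonempty X›
  obtain ⟨f, rfl⟩ := hGc.exists_eq_range ((hG x).2.imp fun _ hq => hq.1)
  exact ⟨f, fun x => by
    obtain ⟨-, -, ⟨k, rfl⟩, hk⟩ := hG x
    exact ⟨k, hk⟩⟩

lemma EReal.comap_coe_nhdsLT_top : comap Real.toEReal (𝓝[<] ⊤) = atTop := by
  rw [Iio_top, EReal.nhdsWithin_top, comap_map EReal.coe_injective]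

section Curves

variable {d : X → X → ℝ} [T : TopologicalSpace X] {σ τ : ℝ → X}

lemma IsIsocausalOn.congr {S : Set ℝ} (h : IsIsocausalOn T d σ S) (heq : EqOn σ τ S) :
    IsIsocausalOn T d τ S :=
  ⟨h.1.congr heq.symm, fun s hs t ht hst => heq hs ▸ heq ht ▸ h.2 s hs t ht hst⟩

lemma IsIsocausalOn.comp_strictMono {S S' : Set ℝ} {φ : ℝ → ℝ} (h : IsIsocausalOn T d σ S)
    (hφ : StrictMono φ) (hφc : Continuous φ) (hmaps : MapsTo φ S' S) :
    IsIsocausalOn T d (σ ∘ φ) S' :=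
  ⟨h.1.comp hφc.continuousOn hmaps, fun _ hs _ ht hst => h.2 _ (hmaps hs) _ (hmaps ht) (hφ hst)⟩

lemma IsIsocausalOn.union_Icc (hsep : DistinguishesPoints d) {a m c : ℝ}
    (h₁ : IsIsocausalOn T d σ (Icc a m)) (h₂ : IsIsocausalOn T d σ (Icc m c)) :
    IsIsocausalOn T d σ (Icc a c) := by
  refine ⟨(h₁.1.union_of_isClosed h₂.1 isClosed_Icc isClosed_Icc).mono Icc_subset_Icc_union_Icc,
    fun s hs t ht hst => ?_⟩
  rcases le_or_gt t m with htm | hmt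
  · exact h₁.2 s ⟨hs.1, hst.le.trans htm⟩ t ⟨hs.1.trans hst.le, htm⟩ hst
  rcases le_or_gt m s with hms | hsm
  · exact h₂.2 s ⟨hms, hst.le.trans ht.2⟩ t ⟨hms.trans hst.le, ht.2⟩ hst
  · exact (h₁.2 s ⟨hs.1, hsm.le⟩ m ⟨hs.1.trans hsm.le, le_rfl⟩ hsm).trans hsep
      (h₂.2 m ⟨le_rfl, hmt.le.trans ht.2⟩ t ⟨hmt.le, ht.2⟩ hmt)

lemma isIsocausalOn_Ici_of_forall_Icc {a b : ℝ}
    (h : ∀ n : ℕ, IsIsocausalOn T d σ (Icc a (b + n))) : IsIsocausalOn T d σ (Ici a) := by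
  refine ⟨fun x hx => ?_, fun s hs t ht hst => ?_⟩
  · obtain ⟨n, hn⟩ := exists_nat_gt (x - b)
    refine ((h n).1 x ⟨hx, by linarith⟩).mono_of_mem_nhdsWithin ?_
    exact mem_of_superset (inter_mem_nhdsWithin _ (Iio_mem_nhds (by linarith)))
      fun y hy => ⟨hy.1, le_of_lt hy.2⟩
  · obtain ⟨n, hn⟩ := exists_nat_gt (t - b)
    exact (h n).2 s ⟨hs, by linarith⟩ t ⟨ht, by linarith⟩ hst

lemma IsIsocausalOn.Icc_of_tendsto (hcont : Continuous fun q : X × X => d q.1 q.2)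
    (hsep : DistinguishesPoints d) {a b : ℝ} (h : IsIsocausalOn T d σ (Ico a b))
    (hb : Tendsto σ (𝓝[<] b) (𝓝 (σ b))) : IsIsocausalOn T d σ (Icc a b) := by
  have hlt_end : ∀ s ∈ Ico a b, CausalLt d (σ s) (σ b) := by
    intro s hs
    obtain ⟨s', hss', hs'b⟩ := exists_between hs.2
    refine (h.2 s hs s' ⟨hs.1.trans hss'.le, hs'b⟩ hss').trans_jrel hsep
      (jrel_of_tendsto hcont ?_ hb)
    filter_upwards [Ioo_mem_nhdsLT hs'b] with t ht
    exact (h.2 s' ⟨hs.1.trans hss'.le, hs'b⟩ t ⟨(hs.1.trans hss'.le).trans ht.1.le, ht.2⟩ ht.1).1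
  refine ⟨fun x hx => ?_, fun s hs t ht hst => ?_⟩
  · rcases hx.2.lt_or_eq with hxb | rfl
    · refine (h.1 x ⟨hx.1, hxb⟩).mono_of_mem_nhdsWithin ?_
      exact mem_of_superset (inter_mem_nhdsWithin _ (Iio_mem_nhds hxb)) fun y hy => ⟨hy.1.1, hy.2⟩
    · exact (continuousWithinAt_Iio_iff_Iic.1 hb).mono Icc_subset_Iic_self
  · rcases ht.2.lt_or_eq with htb | rfl
    · exact h.2 s ⟨hs.1, hst.trans htb⟩ t ⟨ht.1, htb⟩ hst
    · exact hlt_end s ⟨hs.1, hst⟩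

lemma IsPrelength.exists_isIsocausalOn_Icc (hpre : IsPrelength T d) {x y : X} (hxy : 0 < d x y)
    {u v : ℝ} (huv : u < v) :
    ∃ σ : ℝ → X, IsIsocausalOn T d σ (Icc u v) ∧ σ u = x ∧ σ v = y := by
  obtain ⟨a, b, hab, σ, hσ, rfl, rfl⟩ := hpre x y hxy
  have hk : 0 < (b - a) / (v - u) := div_pos (sub_pos.2 hab) (sub_pos.2 huv)
  set φ : ℝ → ℝ := fun t => a + (b - a) / (v - u) * (t - u)
  have hφ : StrictMono φ := fun s t hst => by simp only [φ]; gcongr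
  have hφu : φ u = a := by simp [φ]
  have hφv : φ v = b := by simp only [φ]; field_simp [(sub_pos.2 huv).ne']; ring
  refine ⟨σ ∘ φ, hσ.comp_strictMono hφ (by fun_prop) ?_, by simp [hφu], by simp [hφv]⟩
  exact fun t ht => ⟨hφu ▸ hφ.monotone ht.1, hφv ▸ hφ.monotone ht.2⟩

lemma IsPrelength.exists_isIsocausalOn_Icc_through (hsep : DistinguishesPoints d)
    (hpre : IsPrelength T d) (hfut : ∀ x : X, ∃ y, 0 < d x y) (x g : X) {u v : ℝ} (huv : u < v) :
    ∃ σ : ℝ → X, IsIsocausalOn T d σ (Icc u v) ∧ σ u = x ∧ (0 < d x g → 0 < d g (σ v)) := by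
  by_cases hxg : 0 < d x g
  · obtain ⟨m, hum, hmv⟩ := exists_between huv
    obtain ⟨r, hgr⟩ := hfut g
    obtain ⟨σ₁, hσ₁, h₁u, h₁m⟩ := hpre.exists_isIsocausalOn_Icc hxg hum
    obtain ⟨σ₂, hσ₂, h₂m, h₂v⟩ := hpre.exists_isIsocausalOn_Icc hgr hmv
    set σ : ℝ → X := fun t => if t ≤ m then σ₁ t else σ₂ t
    have h₁ : EqOn σ₁ σ (Icc u m) := fun t ht => (if_pos ht.2).symm
    have h₂ : EqOn σ₂ σ (Icc m v) := by
      intro t ht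
      rcases ht.1.lt_or_eq with hmt | rfl
      · exact (if_neg hmt.not_ge).symm
      · simp [σ, h₁m, h₂m]
    refine ⟨σ, (hσ₁.congr h₁).union_Icc hsep (hσ₂.congr h₂), ?_, fun _ => ?_⟩
    · rw [← h₁ ⟨le_rfl, hum.le⟩, h₁u]
    · rwa [← h₂ ⟨hmv.le, le_rfl⟩, h₂v]
  · obtain ⟨y, hxy⟩ := hfut x
    obtain ⟨σ, hσ, hu, -⟩ := hpre.exists_isIsocausalOn_Icc hxy huv
    exact ⟨σ, hσ, hu, fun h => absurd h hxg⟩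

end Curves

noncomputable def concatSegments (γ : ℝ → X) (b : ℝ) (seg : ℕ → ℝ → X) (t : ℝ) : X :=
  if t < b then γ t else seg ⌊t - b⌋₊ t

section Concat

variable {γ : ℝ → X} {b : ℝ} {seg : ℕ → ℝ → X}

lemma concatSegments_of_lt {t : ℝ} (ht : t < b) : concatSegments γ b seg t = γ t :=
  if_pos ht

lemma concatSegments_of_mem_Icc
    (hmatch : ∀ n : ℕ, seg n (b + n + 1) = seg (n + 1) (b + (n + 1 : ℕ)))
    {n : ℕ} {t : ℝ} (ht : t ∈ Icc (b + n) (b + n + 1)) : concatSegments γ b seg t = seg n t := by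
  have hn : (0 : ℝ) ≤ n := n.cast_nonneg
  rw [concatSegments, if_neg (by linarith [ht.1])]
  rcases ht.2.lt_or_eq with hlt | rfl
  · rw [(Nat.floor_eq_iff (by linarith [ht.1])).2 ⟨by linarith [ht.1], by linarith⟩]
  · rw [hmatch, show b + n + 1 - b = ((n + 1 : ℕ) : ℝ) by push_cast; ring, Nat.floor_natCast]
    push_cast
    ring_nf

variable [T : TopologicalSpace X] {d : X → X → ℝ}

lemma isIsocausalOn_concatSegments (hcont : Continuous fun q : X × X => d q.1 q.2)
    (hsep : DistinguishesPoints d) {a : ℝ} (hγ : IsIsocausalOn T d γ (Ico a b))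
    (hlim : Tendsto γ (𝓝[<] b) (𝓝 (seg 0 b)))
    (hseg : ∀ n : ℕ, IsIsocausalOn T d (seg n) (Icc (b + n) (b + n + 1)))
    (hmatch : ∀ n : ℕ, seg n (b + n + 1) = seg (n + 1) (b + (n + 1 : ℕ))) :
    IsIsocausalOn T d (concatSegments γ b seg) (Ici a) := by
  have hb : concatSegments γ b seg b = seg 0 b := by
    simpa using concatSegments_of_mem_Icc (γ := γ) hmatch (n := 0) (t := b) (by simp)
  have hstart : IsIsocausalOn T d (concatSegments γ b seg) (Icc a b) := by
    refine (hγ.congr fun t ht => (concatSegments_of_lt ht.2).symm).Icc_of_tendsto hcont hsep ?_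
    rw [hb]
    exact hlim.congr' (eventually_nhdsWithin_of_forall fun t ht => (concatSegments_of_lt ht).symm)
  refine isIsocausalOn_Ici_of_forall_Icc (b := b) fun n => ?_
  induction n with
  | zero => simpa using hstart
  | succ n ih =>
    rw [Nat.cast_succ, ← add_assoc]
    exact ih.union_Icc hsep
      ((hseg n).congr fun t ht => (concatSegments_of_mem_Icc hmatch ht).symm)

end Concat

section Extension

variable {d : X → X → ℝ} [T : TopologicalSpace X]

lemma IsPrelength.exists_chain (hsep : DistinguishesPoints d) (hpre : IsPrelength T d)
    (hfut : ∀ x : X, ∃ y, 0 < d x y) (f : ℕ → X) (p : X) (b : ℝ) :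
    ∃ (x : ℕ → X) (seg : ℕ → ℝ → X), x 0 = p ∧
      (∀ n : ℕ, IsIsocausalOn T d (seg n) (Icc (b + n) (b + n + 1))) ∧
      (∀ n : ℕ, seg n (b + n) = x n) ∧ (∀ n : ℕ, seg n (b + n + 1) = x (n + 1)) ∧
      ∀ n : ℕ, 0 < d (x n) (f n) → 0 < d (f n) (x (n + 1)) := by
  choose σ hσ hσ₀ hσf using fun (y : X) (n : ℕ) =>
    hpre.exists_isIsocausalOn_Icc_through hsep hfut y (f n) (lt_add_one (b + n))
  let x : ℕ → X := fun n => Nat.rec p (fun k y => σ y k (b + k + 1)) n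
  exact ⟨x, fun n => σ (x n) n, rfl, fun n => hσ _ n, fun n => hσ₀ _ n, fun _ => rfl,
    fun n => by simpa only [hσ₀] using hσf (x n) n⟩

lemma IsPrelength.exists_isIsocausalOn_Ici_extension
    (hcont : Continuous fun q : X × X => d q.1 q.2) (hsep : DistinguishesPoints d)
    (hpre : IsPrelength T d) (hfut : ∀ x : X, ∃ y, 0 < d x y) (f : ℕ → X) {a b : ℝ}
    {γ : ℝ → X} (hγ : IsIsocausalOn T d γ (Ico a b)) {p : X} (hp : Tendsto γ (𝓝[<] b) (𝓝 p)) :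
    ∃ γ' : ℝ → X, IsIsocausalOn T d γ' (Ici a) ∧ EqOn γ' γ (Iio b) ∧
      (∀ n : ℕ, Jrel d (γ' (b + n)) (γ' (b + (n + 1 : ℕ)))) ∧
      ∀ n : ℕ, 0 < d (γ' (b + n)) (f n) → 0 < d (f n) (γ' (b + (n + 1 : ℕ))) := by
  obtain ⟨x, seg, hx₀, hseg, hstart, hend, hpass⟩ := hpre.exists_chain hsep hfut f p b
  have hmatch : ∀ n : ℕ, seg n (b + n + 1) = seg (n + 1) (b + (n + 1 : ℕ)) := fun n => by
    rw [hend, hstart]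
  have hx : ∀ n : ℕ, concatSegments γ b seg (b + n) = x n := fun n =>
    (concatSegments_of_mem_Icc hmatch ⟨le_rfl, by linarith⟩).trans (hstart n)
  have hseg₀ : seg 0 b = p := by simpa [hx₀] using hstart 0
  refine ⟨concatSegments γ b seg,
    isIsocausalOn_concatSegments hcont hsep hγ (hseg₀ ▸ hp) hseg hmatch,
    fun t ht => concatSegments_of_lt ht, fun n => ?_, fun n => ?_⟩ <;> rw [hx, hx]
  · rw [← hstart, ← hend]
    exact ((hseg n).2 _ ⟨le_rfl, by linarith⟩ _ ⟨by linarith, le_rfl⟩ (lt_add_one _)).1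
  · exact hpass n

end Extension

theorem lms_extension_to_inextendible_general
    (T : TopologicalSpace X) (d : X → X → ℝ)
    (h : IsLMS T d) (hcg : CountablyGenerated d) (hpre : IsPrelength T d)
    (b : ℝ) (γ : ℝ → X)
    (hiso : IsIsocausalOn T d γ (Set.Ico 0 b))
    (p : X) (hp : letI := T; Filter.Tendsto γ (𝓝[<] b) (𝓝 p)) :
    ∃ (c : EReal) (γ' : ℝ → X), (b : EReal) < c ∧
      IsIsocausalOn T d γ' {t : ℝ | 0 ≤ t ∧ (t : EReal) < c} ∧
      (letI := T;
        ¬∃ q : X, Filter.Tendsto γ'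
          (Filter.comap (fun t : ℝ => (t : EReal)) (𝓝[<] c)) (𝓝 q)) ∧
      ∀ t ∈ Set.Ico (0 : ℝ) b, γ' t = γ t := by
  let _ : TopologicalSpace X := T
  obtain ⟨-, htri, ⟨hcont, -⟩, hsep⟩ := h
  have : Nonempty X := ⟨p⟩
  obtain ⟨f, hf⟩ := hcg.exists_seq_future
  obtain ⟨γ', hγ', hγ'γ, hchain, hpass⟩ := hpre.exists_isIsocausalOn_Ici_extension hcont hsep
    (fun x => (hf x).elim fun k hk => ⟨f k, hk⟩) f hiso hp
  have hdom : {t : ℝ | 0 ≤ t ∧ (t : EReal) < ⊤} = Ici 0 := by ext; simp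
  refine ⟨⊤, γ', EReal.coe_lt_top b, hdom ▸ hγ', ?_, fun t ht => hγ'γ ht.2⟩
  rw [EReal.comap_coe_nhdsLT_top]
  rintro ⟨q, hq⟩
  exact not_tendsto_of_forall_passes htri hcont hf (x := fun n : ℕ => γ' (b + n)) hchain hpass q
    (hq.comp (tendsto_atTop_add_const_left _ b tendsto_natCast_atTop_atTop))

/-- In a countably generated Lorentzian prelength space, every isocausal curve
`γ : [0,b) → X`, `b < ∞`, with a future endpoint is the restriction of a future
inextendible isocausal curve `γ' : [0,c) → X` with `c ∈ (b, ∞]`. -/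
theorem lms_extension_to_inextendible
    (T : TopologicalSpace X) (d : X → X → ℝ)
    (h : IsLMS T d) (hcg : CountablyGenerated d) (hpre : IsPrelength T d)
    (b : ℝ) (hb : 0 < b) (γ : ℝ → X)
    (hiso : IsIsocausalOn T d γ (Set.Ico 0 b))
    (p : X) (hp : letI := T; Filter.Tendsto γ (𝓝[<] b) (𝓝 p)) :
    ∃ (c : EReal) (γ' : ℝ → X), (b : EReal) < c ∧
      IsIsocausalOn T d γ' {t : ℝ | 0 ≤ t ∧ (t : EReal) < c} ∧
      (letI := T;
        ¬∃ q : X, Filter.Tendsto γ'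
          (Filter.comap (fun t : ℝ => (t : EReal)) (𝓝[<] c)) (𝓝 q)) ∧
      ∀ t ∈ Set.Ico (0 : ℝ) b, γ' t = γ t :=
  lms_extension_to_inextendible_general T d h hcg hpre b γ hiso p hp
end

section
/- If (X,d) is a countably generated Lorentzian metric space, then its topology is σ-compact, second-countable, and Polish (i.e. separable and completely metrizable). -/
open Filter Topology Set

variable {X : Type*}

/-!
Every point lies in a chronological diamond `I(x, y)` with `x, y ∈ G`, and every diamond is open
and relatively compact: choosing `x', x'', y'` with `d(x', x), d(x'', x'), d(y, y') > 0`, the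
reverse triangle inequality puts `I(x, y)` inside the slice at `x'` of the compact set that
axiom (ii) attaches to `I(x'', y')` and `ε = d(x', x)`. So `X` is locally compact and σ-compact.
The map `z ↦ (d(z, ·), d(·, z))` into `C(X, ℝ)²` is continuous and, by axiom (iii), injective;
since `C(X, ℝ)` is metrizable for such `X`, it makes `X` Hausdorff and every compact set
metrizable, whence `X` is second countable. A locally compact second countable Hausdorff space
is open in the completion of any compatible metric, hence Polish.
-/

open TopologicalSpace

theorem Topology.IsDenseEmbedding.isOpen_range {Y : Type*} [TopologicalSpace X]
    [TopologicalSpace Y] [LocallyCompactSpace X] [T2Space Y] {f : X → Y}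
    (hf : IsDenseEmbedding f) : IsOpen (range f) := by
  refine isOpen_iff_mem_nhds.2 ?_
  rintro _ ⟨x, rfl⟩
  obtain ⟨K, hKx, -, hK⟩ := local_compact_nhds (univ_mem (f := 𝓝 x))
  rw [hf.isInducing.nhds_eq_comap] at hKx
  obtain ⟨W, hW, hWK⟩ := hKx
  obtain ⟨V, hVW, hV, hxV⟩ := mem_nhds_iff.1 hW
  refine mem_of_superset (hV.mem_nhds hxV) ?_
  calc V ⊆ closure (V ∩ range f) := hf.dense.open_subset_closure_inter hV
    _ ⊆ closure (f '' K) := by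
        refine closure_mono ?_
        rintro _ ⟨hy, x', rfl⟩
        exact ⟨x', hWK (hVW hy), rfl⟩
    _ = f '' K := (hK.image hf.continuous).isClosed.closure_eq
    _ ⊆ range f := image_subset_range f K

theorem PolishSpace.of_locallyCompactSpace [TopologicalSpace X] [T2Space X]
    [LocallyCompactSpace X] [SecondCountableTopology X] : PolishSpace X := by
  let := metrizableSpaceMetric X
  have he := UniformSpace.Completion.isDenseEmbedding_coe (α := X)
  have := he.isOpen_range.polishSpace
  exact he.isEmbedding.toHomeomorph.isClosedEmbedding.polishSpace

theorem secondCountableTopology_of_forall_isCompact [TopologicalSpace X]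
    [WeaklyLocallyCompactSpace X] [SigmaCompactSpace X]
    (h : ∀ K : Set X, IsCompact K → SecondCountableTopology K) : SecondCountableTopology X := by
  let K := CompactExhaustion.choice X
  have : ∀ n, SecondCountableTopology (interior (K n)) := fun n =>
    have := h _ (K.isCompact n)
    (IsEmbedding.inclusion interior_subset).secondCountableTopology
  refine secondCountableTopology_of_countable_cover (U := fun n => interior (K n))
    (fun _ => isOpen_interior) ?_
  exact iUnion_eq_univ_iff.2 fun x =>
    (K.exists_mem_nhds x).imp fun _ => mem_interior_iff_mem_nhds.2

theorem IsCompact.secondCountableTopology_of_continuous_injective {Y : Type*}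
    [TopologicalSpace X] [TopologicalSpace Y] [MetrizableSpace Y] {f : X → Y}
    (hf : Continuous f) (hinj : Function.Injective f) {K : Set X} (hK : IsCompact K) :
    SecondCountableTopology K := by
  have : CompactSpace K := isCompact_iff_compactSpace.1 hK
  have hfK : Continuous fun z : K => f z := hf.comp continuous_subtype_val
  have : MetrizableSpace K :=
    (hfK.isClosedEmbedding (hinj.comp Subtype.val_injective)).isEmbedding.metrizableSpace
  infer_instance

/-- The chronological diamond `I(x, y)`. -/
def chronoDiamond (d : X → X → ℝ) (x y : X) : Set X :=
  {z | 0 < d x z ∧ 0 < d z y}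

theorem CountablyGenerated.noBoundary {d : X → X → ℝ} (h : CountablyGenerated d) :
    NoBoundary d := by
  obtain ⟨G, -, hG⟩ := h
  exact fun x => ⟨(hG x).1.imp fun _ => And.right, (hG x).2.imp fun _ => And.right⟩

section Topology

variable [TopologicalSpace X] {d : X → X → ℝ}

theorem isOpen_chronoDiamond (hd : Continuous fun p : X × X => d p.1 p.2) (x y : X) :
    IsOpen (chronoDiamond d x y) :=
  (isOpen_lt continuous_const (hd.comp (Continuous.prodMk_right x))).inter
    (isOpen_lt continuous_const (hd.comp (Continuous.prodMk_left y)))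

theorem exists_continuous_injective_of_distinguishes
    (hd : Continuous fun p : X × X => d p.1 p.2)
    (hdist : ∀ x y : X, x ≠ y → ∃ z : X, d x z ≠ d y z ∨ d z x ≠ d z y) :
    ∃ Φ : X → C(X, ℝ) × C(X, ℝ), Continuous Φ ∧ Function.Injective Φ := by
  let future : C(X, C(X, ℝ)) := ContinuousMap.curry ⟨_, hd⟩
  let past : C(X, C(X, ℝ)) := ContinuousMap.curry ⟨_, hd.comp continuous_swap⟩
  refine ⟨fun x => (future x, past x), future.continuous.prodMk past.continuous, ?_⟩
  intro x y hxy
  by_contra hne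
  obtain ⟨z, hz | hz⟩ := hdist x y hne
  · exact hz (DFunLike.congr_fun (congrArg Prod.fst hxy) z)
  · exact hz (DFunLike.congr_fun (congrArg Prod.snd hxy) z)

theorem NoBoundary.isCompact_closure_chronoDiamond [T2Space X] (hnb : NoBoundary d)
    (htri : ∀ x y z : X, 0 < d x y → 0 < d y z → d x y + d y z ≤ d x z)
    (hcomp : ∀ x y : X, ∀ ε : ℝ, 0 < ε → IsCompact ({p : X × X | ε ≤ d p.1 p.2} ∩
      (closure (chronoDiamond d x y) ×ˢ closure (chronoDiamond d x y))))
    (x y : X) : IsCompact (closure (chronoDiamond d x y)) := by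
  obtain ⟨x', hx'⟩ := (hnb x).1
  obtain ⟨x'', hx''⟩ := (hnb x').1
  obtain ⟨y', hy'⟩ := (hnb y).2
  let C := {p : X × X | d x' x ≤ d p.1 p.2} ∩
    (closure (chronoDiamond d x'' y') ×ˢ closure (chronoDiamond d x'' y'))
  have hC : IsCompact C := hcomp x'' y' _ hx'
  refine ((hC.inter_right ((isClosed_singleton (x := x')).prod isClosed_univ)).image
    continuous_snd).closure_of_subset ?_
  rintro z ⟨hxz, hzy⟩
  have hx'z : d x' x ≤ d x' z := by linarith [htri _ _ _ hx' hxz]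
  have hx'y : 0 < d x' y := by linarith [htri _ _ _ (hx'.trans_le hx'z) hzy]
  have hx'y' : 0 < d x' y' := by linarith [htri _ _ _ hx'y hy']
  have hx'_mem : x' ∈ chronoDiamond d x'' y' := ⟨hx'', hx'y'⟩
  have hz_mem : z ∈ chronoDiamond d x'' y' :=
    ⟨by linarith [htri _ _ _ hx'' (hx'.trans_le hx'z)], by linarith [htri _ _ _ hzy hy']⟩
  exact ⟨(x', z), ⟨⟨hx'z, subset_closure hx'_mem, subset_closure hz_mem⟩, rfl, trivial⟩,
    rfl⟩

theorem NoBoundary.weaklyLocallyCompactSpace (hnb : NoBoundary d)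
    (hd : Continuous fun p : X × X => d p.1 p.2)
    (hK : ∀ x y : X, IsCompact (closure (chronoDiamond d x y))) :
    WeaklyLocallyCompactSpace X where
  exists_compact_mem_nhds z := by
    obtain ⟨⟨x, hx⟩, ⟨y, hy⟩⟩ := hnb z
    exact ⟨_, hK x y, mem_of_superset ((isOpen_chronoDiamond hd x y).mem_nhds ⟨hx, hy⟩)
      subset_closure⟩

theorem CountablyGenerated.sigmaCompactSpace (hcg : CountablyGenerated d)
    (hK : ∀ x y : X, IsCompact (closure (chronoDiamond d x y))) : SigmaCompactSpace X := by
  obtain ⟨G, hG, hGX⟩ := hcg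
  refine .of_countable ((fun p : X × X => closure (chronoDiamond d p.1 p.2)) '' G ×ˢ G)
    ((hG.prod hG).image _) (forall_mem_image.2 fun p _ => hK p.1 p.2) ?_
  refine eq_univ_of_forall fun z => ?_
  obtain ⟨⟨x, hxG, hx⟩, ⟨y, hyG, hy⟩⟩ := hGX z
  exact mem_sUnion_of_mem (subset_closure (show z ∈ chronoDiamond d x y from ⟨hx, hy⟩))
    (mem_image_of_mem _ (mk_mem_prod hxG hyG))

end Topology

/-- The topology of a countably generated Lorentzian metric space is σ-compact,
second countable and Polish. -/
theorem lms_countably_generated_polish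
    (T : TopologicalSpace X) (d : X → X → ℝ)
    (h : IsLMS T d) (hcg : CountablyGenerated d) :
    letI := T
    SigmaCompactSpace X ∧ SecondCountableTopology X ∧ PolishSpace X := by
  let := T
  obtain ⟨-, htri, ⟨hd, hcomp⟩, hdist⟩ := h
  obtain ⟨Φ, hΦ, hΦinj⟩ := exists_continuous_injective_of_distinguishes hd hdist
  have : T2Space X := .of_injective_continuous hΦinj hΦ
  have hK := hcg.noBoundary.isCompact_closure_chronoDiamond htri hcomp
  have : WeaklyLocallyCompactSpace X := hcg.noBoundary.weaklyLocallyCompactSpace hd hK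
  have : SigmaCompactSpace X := hcg.sigmaCompactSpace hK
  have : SecondCountableTopology X := secondCountableTopology_of_forall_isCompact
    fun _ hK => hK.secondCountableTopology_of_continuous_injective hΦ hΦinj
  exact ⟨inferInstance, inferInstance, .of_locallyCompactSpace⟩
end

section
/- Let (X,d) be a countably generated Lorentzian metric space, let K ⊆ X be compact, let σₙ : [aₙ,bₙ] → K be continuous curves and σ : [a,b] → K a continuous curve. For a continuous curve c : [α,β] → K denote by c̃ : ℝ → K its constant extension c̃(t) = c(min(max(t,α),β)). Say σₙ converges uniformly to σ if aₙ → a, bₙ → b, and σ̃ₙ → σ̃ uniformly on ℝ with respect to the unique uniform structure compatible with the compact Hausdorff topology of K. Then σₙ converges uniformly to σ if and only if aₙ → a, bₙ → b, and for every z ∈ X the real-valued functions t ↦ d(z, σ̃ₙ(t)) and t ↦ d(σ̃ₙ(t), z) converge uniformly on ℝ to t ↦ d(z, σ̃(t)) and t ↦ d(σ̃(t), z), respectively. -/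
open Filter Topology Set

variable {X : Type*}

/-- The constant extension of a curve defined on `[α,β]` to all of `ℝ`. -/
def constExt (γ : ℝ → X) (α β : ℝ) : ℝ → X :=
  fun t => γ (min (max t α) β)

/-- Uniform convergence of maps with values in a compact set `K`, with respect to
the unique uniform structure compatible with the compact Hausdorff topology of `K`
(whose entourages are the neighbourhoods of the diagonal). -/
def UnifConvTo (T : TopologicalSpace X) (K : Set X) (f : ℕ → ℝ → X) (g : ℝ → X) : Prop :=
  letI := T
  ∀ U : Set (X × X), IsOpen U → (∀ y ∈ K, (y, y) ∈ U) →
    ∀ᶠ n in Filter.atTop, ∀ t : ℝ, (g t, f n t) ∈ U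

/-!
The functions `d z ·` and `d · z` are continuous and separate points, so on the compact set `K`
they already determine the uniform structure: the pairs of `K × K` outside an open neighbourhood `U`
of the diagonal form a compact set, on which finitely many of these functions stay uniformly apart.
Uniform closeness of `σ̃ₙ` to `σ̃` in those finitely many functions therefore puts `(σ̃ t, σ̃ₙ t)` in `U`.
-/

lemma constExt_mem {γ : ℝ → X} {α β : ℝ} {K : Set X} (hαβ : α ≤ β) (hγ : MapsTo γ (Icc α β) K)
    (t : ℝ) : constExt γ α β t ∈ K :=
  hγ ⟨le_min (le_max_right t α) hαβ, min_le_right _ _⟩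

section SeparatingFamily

variable [TopologicalSpace X] {ι : Type*} {f : ι → X → ℝ} {K : Set X}

lemma IsCompact.exists_finset_forall_abs_sub_lt_imp_mem (hf : ∀ i, Continuous (f i))
    (hsep : ∀ x ∈ K, ∀ y ∈ K, x ≠ y → ∃ i, f i x ≠ f i y) (hK : IsCompact K)
    {U : Set (X × X)} (hU : IsOpen U) (hdiag : ∀ y ∈ K, (y, y) ∈ U) :
    ∃ s : Finset ι, ∃ δ > 0, ∀ x ∈ K, ∀ y ∈ K, (∀ i ∈ s, |f i x - f i y| < δ) → (x, y) ∈ U := by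
  classical
  let Z : ι × ℕ → Set (X × X) := fun j => {p | |f j.1 p.1 - f j.1 p.2| ≤ 1 / (j.2 + 1)}
  have hZ : ∀ j, IsClosed (Z j) := fun j =>
    isClosed_le (((hf j.1).comp continuous_fst).sub ((hf j.1).comp continuous_snd)).abs
      continuous_const
  have hempty : (K ×ˢ K \ U) ∩ ⋂ j, Z j = ∅ := by
    refine eq_empty_of_forall_notMem fun ⟨x, y⟩ ⟨⟨⟨hx, hy⟩, hxyU⟩, hxyZ⟩ => ?_
    have hxy : x ≠ y := by
      rintro rfl
      exact hxyU (hdiag x hx)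
    obtain ⟨i, hi⟩ := hsep x hx y hy hxy
    obtain ⟨n, hn⟩ := exists_nat_one_div_lt (abs_sub_pos.2 hi)
    exact (mem_iInter.1 hxyZ (i, n)).not_gt hn
  obtain ⟨t, ht⟩ := ((hK.prod hK).diff hU).elim_finite_subfamily_closed Z hZ hempty
  refine ⟨t.image Prod.fst, 1 / (t.sup Prod.snd + 1), by positivity, fun x hx y hy hclose => ?_⟩
  by_contra hxyU
  refine ht.subset ⟨⟨⟨hx, hy⟩, hxyU⟩, mem_iInter₂.2 fun j hj => ?_⟩
  calc |f j.1 x - f j.1 y| ≤ 1 / (t.sup Prod.snd + 1 : ℝ) :=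
        (hclose j.1 (Finset.mem_image_of_mem _ hj)).le
    _ ≤ 1 / (j.2 + 1) := by
        gcongr
        exact_mod_cast Finset.le_sup (f := Prod.snd) hj

lemma UnifConvTo.tendstoUniformly_comp {F : ℕ → ℝ → X} {G : ℝ → X}
    (hFG : UnifConvTo ‹_› K F G) {g : X → ℝ} (hg : Continuous g) :
    TendstoUniformly (fun n t => g (F n t)) (fun t => g (G t)) atTop :=
  Metric.tendstoUniformly_iff.2 fun ε hε =>
    hFG {p | dist (g p.1) (g p.2) < ε}
      (isOpen_lt ((hg.comp continuous_fst).dist (hg.comp continuous_snd)) continuous_const)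
      (fun y _ => by simpa using hε) |>.mono fun _ hn t => hn t

lemma unifConvTo_of_forall_tendstoUniformly_comp (hf : ∀ i, Continuous (f i))
    (hsep : ∀ x ∈ K, ∀ y ∈ K, x ≠ y → ∃ i, f i x ≠ f i y) (hK : IsCompact K)
    {F : ℕ → ℝ → X} {G : ℝ → X} (hFK : ∀ n t, F n t ∈ K) (hGK : ∀ t, G t ∈ K)
    (hFG : ∀ i, TendstoUniformly (fun n t => f i (F n t)) (fun t => f i (G t)) atTop) :
    UnifConvTo ‹_› K F G := by
  intro U hU hdiag
  obtain ⟨s, δ, hδ, hsU⟩ := hK.exists_finset_forall_abs_sub_lt_imp_mem hf hsep hU hdiag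
  have hclose : ∀ i ∈ s, ∀ᶠ n in atTop, ∀ t, |f i (G t) - f i (F n t)| < δ := fun i _ =>
    Metric.tendstoUniformly_iff.1 (hFG i) δ hδ
  filter_upwards [(Finset.eventually_all s).2 hclose] with n hn t
  exact hsU _ (hGK t) _ (hFK n t) fun i hi => hn i hi t

lemma unifConvTo_iff_forall_tendstoUniformly_comp (hf : ∀ i, Continuous (f i))
    (hsep : ∀ x ∈ K, ∀ y ∈ K, x ≠ y → ∃ i, f i x ≠ f i y) (hK : IsCompact K)
    {F : ℕ → ℝ → X} {G : ℝ → X} (hFK : ∀ n t, F n t ∈ K) (hGK : ∀ t, G t ∈ K) :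
    UnifConvTo ‹_› K F G ↔
      ∀ i, TendstoUniformly (fun n t => f i (F n t)) (fun t => f i (G t)) atTop :=
  ⟨fun hFG i => hFG.tendstoUniformly_comp (hf i),
    unifConvTo_of_forall_tendstoUniformly_comp hf hsep hK hFK hGK⟩

end SeparatingFamily

def distFunctions (d : X → X → ℝ) : X ⊕ X → X → ℝ :=
  Sum.elim d fun z x => d x z

lemma continuous_distFunctions [TopologicalSpace X] {d : X → X → ℝ}
    (hd : Continuous fun p : X × X => d p.1 p.2) (i : X ⊕ X) : Continuous (distFunctions d i) := by
  cases i with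
  | inl z => exact hd.comp (Continuous.prodMk_right z)
  | inr z => exact hd.comp (Continuous.prodMk_left z)

lemma distFunctions_separating {d : X → X → ℝ}
    (hsep : ∀ x y : X, x ≠ y → ∃ z : X, d x z ≠ d y z ∨ d z x ≠ d z y) {x y : X} (hxy : x ≠ y) :
    ∃ i, distFunctions d i x ≠ distFunctions d i y := by
  obtain ⟨z, hz | hz⟩ := hsep x y hxy
  exacts [⟨.inr z, hz⟩, ⟨.inl z, hz⟩]

theorem lms_uniform_convergence_via_d_general
    (T : TopologicalSpace X) (d : X → X → ℝ)
    (h : IsLMS T d)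
    (K : Set X) (hK : letI := T; IsCompact K)
    (a b : ℝ) (hab : a ≤ b) (an bn : ℕ → ℝ) (hanbn : ∀ n, an n ≤ bn n)
    (σn : ℕ → ℝ → X) (σ : ℝ → X)
    (hσnK : ∀ n, ∀ t ∈ Set.Icc (an n) (bn n), σn n t ∈ K)
    (hσK : ∀ t ∈ Set.Icc a b, σ t ∈ K) :
    (Filter.Tendsto an Filter.atTop (𝓝 a) ∧ Filter.Tendsto bn Filter.atTop (𝓝 b) ∧
      UnifConvTo T K (fun n => constExt (σn n) (an n) (bn n)) (constExt σ a b)) ↔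
    (Filter.Tendsto an Filter.atTop (𝓝 a) ∧ Filter.Tendsto bn Filter.atTop (𝓝 b) ∧
      ∀ z : X,
        TendstoUniformly (fun n t => d z (constExt (σn n) (an n) (bn n) t))
          (fun t => d z (constExt σ a b t)) Filter.atTop ∧
        TendstoUniformly (fun n t => d (constExt (σn n) (an n) (bn n) t) z)
          (fun t => d (constExt σ a b t) z) Filter.atTop) := by
  let := T
  obtain ⟨-, -, ⟨hd, -⟩, hsep⟩ := h
  refine and_congr_right fun _ => and_congr_right fun _ => ?_
  rw [unifConvTo_iff_forall_tendstoUniformly_comp (continuous_distFunctions hd)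
    (fun x _ y _ => distFunctions_separating hsep) hK
    (fun n => constExt_mem (hanbn n) (hσnK n)) (constExt_mem hab hσK), Sum.forall, ← forall_and]
  rfl

/-- Uniform convergence of continuous curves in a compact subset of a countably
generated Lorentzian metric space is equivalent to uniform convergence of the
composed Lorentzian distance functions `d_z ∘ σₙ` and `d^z ∘ σₙ` for every `z`. -/
theorem lms_uniform_convergence_via_d
    (T : TopologicalSpace X) (d : X → X → ℝ)
    (h : IsLMS T d) (hcg : CountablyGenerated d)
    (K : Set X) (hK : letI := T; IsCompact K)
    (a b : ℝ) (hab : a ≤ b) (an bn : ℕ → ℝ) (hanbn : ∀ n, an n ≤ bn n)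
    (σn : ℕ → ℝ → X) (σ : ℝ → X)
    (hσnc : ∀ n, letI := T; ContinuousOn (σn n) (Set.Icc (an n) (bn n)))
    (hσnK : ∀ n, ∀ t ∈ Set.Icc (an n) (bn n), σn n t ∈ K)
    (hσc : letI := T; ContinuousOn σ (Set.Icc a b))
    (hσK : ∀ t ∈ Set.Icc a b, σ t ∈ K) :
    (Filter.Tendsto an Filter.atTop (𝓝 a) ∧ Filter.Tendsto bn Filter.atTop (𝓝 b) ∧
      UnifConvTo T K (fun n => constExt (σn n) (an n) (bn n)) (constExt σ a b)) ↔
    (Filter.Tendsto an Filter.atTop (𝓝 a) ∧ Filter.Tendsto bn Filter.atTop (𝓝 b) ∧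
      ∀ z : X,
        TendstoUniformly (fun n t => d z (constExt (σn n) (an n) (bn n) t))
          (fun t => d z (constExt σ a b t)) Filter.atTop ∧
        TendstoUniformly (fun n t => d (constExt (σn n) (an n) (bn n) t) z)
          (fun t => d (constExt σ a b t) z) Filter.atTop) :=
  lms_uniform_convergence_via_d_general T d h K hK a b hab an bn hanbn σn σ hσnK hσK
end

section
/- Let (X,d) be a countably generated Lorentzian metric space, let K ⊆ X be compact, and let σₙ : [a,b] → K and σ : [a,b] → K be isocausal curves such that σₙ(t) → σ(t) for every t ∈ [a,b]. Then σₙ converges to σ uniformly with respect to the unique uniform structure compatible with the compact Hausdorff topology of K. -/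
/-!
If the convergence were not uniform, an ultrafilter on the bad pairs `(n, t)`, `n → ∞`, would give
limits `t → t₀` and `σn n t → y` with `(σ t₀, y) ∉ U`. The causal relation `J` is closed, so the
monotonicity of the curves passes to the limit: `σ s ≤ y` whenever eventually `s ≤ t`, and such `s`
accumulate at `t₀` (from below, or `s = a = t₀`), whence `σ t₀ ≤ y` by continuity of `σ`;
symmetrically `y ≤ σ t₀`. Since `d` distinguishes points, `J` is antisymmetric, so `y = σ t₀`,
contradicting `(σ t₀, σ t₀) ∈ U`.
-/

open Filter Topology Set

variable {X : Type*}

variable {α ι : Type*} {d : X → X → ℝ}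

lemma jrel_refl (d : X → X → ℝ) (x : X) : Jrel d x x := fun _ => ⟨le_rfl, le_rfl⟩

lemma jrel_antisymm (hsep : ∀ x y : X, x ≠ y → ∃ z : X, d x z ≠ d y z ∨ d z x ≠ d z y)
    {x y : X} (hxy : Jrel d x y) (hyx : Jrel d y x) : x = y := by
  by_contra hne
  obtain ⟨z, hz | hz⟩ := hsep x y hne
  · exact hz (le_antisymm (hyx z).2 (hxy z).2)
  · exact hz (le_antisymm (hxy z).1 (hyx z).1)

lemma isClosed_jrel [TopologicalSpace X] (hd : Continuous fun p : X × X => d p.1 p.2) :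
    IsClosed {p : X × X | Jrel d p.1 p.2} := by
  simp only [Jrel, ofPred_forall, ofPred_and]
  have hd' {f g : X × X → X} (hf : Continuous f) (hg : Continuous g) :
      Continuous fun p => d (f p) (g p) := hd.comp (hf.prodMk hg)
  exact isClosed_iInter fun z =>
    (isClosed_le (hd' continuous_const continuous_fst) (hd' continuous_const continuous_snd)).inter
      (isClosed_le (hd' continuous_snd continuous_const) (hd' continuous_fst continuous_const))

def CausallyMonotoneOn [Preorder α] (d : X → X → ℝ) (γ : α → X) (S : Set α) : Prop :=
  ∀ ⦃s⦄, s ∈ S → ∀ ⦃t⦄, t ∈ S → s ≤ t → Jrel d (γ s) (γ t)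

lemma IsIsocausalOn.causallyMonotoneOn {T : TopologicalSpace X} {γ : ℝ → X} {S : Set ℝ}
    (h : IsIsocausalOn T d γ S) : CausallyMonotoneOn d γ S := by
  intro s hs t ht hst
  rcases hst.eq_or_lt with rfl | hlt
  · exact jrel_refl d _
  · exact (h.2 s hs t ht hlt).1

lemma mem_closure_setOf_eventually_le [LinearOrder α] [TopologicalSpace α] [OrderTopology α]
    [DenselyOrdered α] {l : Filter ι} [l.NeBot] {a b t₀ : α} {t : ι → α}
    (htI : ∀ᶠ i in l, t i ∈ Icc a b) (ht : Tendsto t l (𝓝 t₀)) :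
    t₀ ∈ closure {s ∈ Icc a b | ∀ᶠ i in l, s ≤ t i} := by
  have ht₀ : t₀ ∈ Icc a b := isClosed_Icc.mem_of_tendsto ht htI
  rcases ht₀.1.eq_or_lt with rfl | hat₀
  · exact subset_closure ⟨ht₀, htI.mono fun i hi => hi.1⟩
  · have hIco : Ico a t₀ ⊆ {s ∈ Icc a b | ∀ᶠ i in l, s ≤ t i} := fun s hs =>
      ⟨⟨hs.1, hs.2.le.trans ht₀.2⟩, (ht.eventually (lt_mem_nhds hs.2)).mono fun _ hi => hi.le⟩
    exact closure_mono hIco (by rw [closure_Ico hat₀.ne]; exact right_mem_Icc.2 hat₀.le)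

lemma mem_closure_setOf_eventually_ge [LinearOrder α] [TopologicalSpace α] [OrderTopology α]
    [DenselyOrdered α] {l : Filter ι} [l.NeBot] {a b t₀ : α} {t : ι → α}
    (htI : ∀ᶠ i in l, t i ∈ Icc a b) (ht : Tendsto t l (𝓝 t₀)) :
    t₀ ∈ closure {s ∈ Icc a b | ∀ᶠ i in l, t i ≤ s} := by
  have := mem_closure_setOf_eventually_le (α := αᵒᵈ) (a := OrderDual.toDual b)
    (b := OrderDual.toDual a) (t := t) (t₀ := t₀) (htI.mono fun _ hi => ⟨hi.2, hi.1⟩) ht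
  rw [Icc_toDual] at this
  exact this

lemma rel_of_mem_closure_setOf_eventually [TopologicalSpace α] [TopologicalSpace X]
    {l : Filter ι} [l.NeBot] {R : X → X → Prop} (hR : IsClosed {p : X × X | R p.1 p.2})
    {S : Set α} (hS : IsClosed S) {γn : ι → α → X} {γ : α → X} (hγ : ContinuousOn γ S)
    (hpt : ∀ s ∈ S, Tendsto (fun i => γn i s) l (𝓝 (γ s))) {t : ι → α} {y : X}
    (hy : Tendsto (fun i => γn i (t i)) l (𝓝 y)) {t₀ : α}
    (ht₀ : t₀ ∈ closure {s ∈ S | ∀ᶠ i in l, R (γn i s) (γn i (t i))}) : R (γ t₀) y := by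
  have hC : IsClosed (S ∩ γ ⁻¹' {x | R x y}) :=
    hγ.preimage_isClosed_of_isClosed hS (hR.preimage (continuous_id.prodMk continuous_const))
  have hsub : {s ∈ S | ∀ᶠ i in l, R (γn i s) (γn i (t i))} ⊆ S ∩ γ ⁻¹' {x | R x y} :=
    fun s hs => ⟨hs.1, hR.mem_of_tendsto ((hpt s hs.1).prodMk_nhds hy) hs.2⟩
  exact (closure_minimal hsub hC ht₀).2

theorem eq_of_tendsto_of_causallyMonotoneOn [LinearOrder α] [TopologicalSpace α]
    [OrderTopology α] [DenselyOrdered α] [TopologicalSpace X]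
    (hd : Continuous fun p : X × X => d p.1 p.2)
    (hsep : ∀ x y : X, x ≠ y → ∃ z : X, d x z ≠ d y z ∨ d z x ≠ d z y)
    {l : Filter ι} [l.NeBot] {a b : α} {γn : ι → α → X} {γ : α → X}
    (hmono : ∀ i, CausallyMonotoneOn d (γn i) (Icc a b)) (hγ : ContinuousOn γ (Icc a b))
    (hpt : ∀ s ∈ Icc a b, Tendsto (fun i => γn i s) l (𝓝 (γ s))) {t : ι → α} {t₀ : α} {y : X}
    (htI : ∀ᶠ i in l, t i ∈ Icc a b) (ht : Tendsto t l (𝓝 t₀))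
    (hy : Tendsto (fun i => γn i (t i)) l (𝓝 y)) : y = γ t₀ := by
  refine (jrel_antisymm hsep ?_ ?_).symm
  · refine rel_of_mem_closure_setOf_eventually (isClosed_jrel hd) isClosed_Icc hγ hpt hy
      (closure_mono ?_ (mem_closure_setOf_eventually_le htI ht))
    exact fun s hs => ⟨hs.1, (hs.2.and htI).mono fun i hi => hmono i hs.1 hi.2 hi.1⟩
  · refine rel_of_mem_closure_setOf_eventually (R := fun x z => Jrel d z x)
      ((isClosed_jrel hd).preimage continuous_swap) isClosed_Icc hγ hpt hy
      (closure_mono ?_ (mem_closure_setOf_eventually_ge htI ht))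
    exact fun s hs => ⟨hs.1, (hs.2.and htI).mono fun i hi => hmono i hi.2 hs.1 hi.1⟩

theorem lms_pointwise_implies_uniform_general
    (T : TopologicalSpace X) (d : X → X → ℝ)
    (h : IsLMS T d)
    (K : Set X) (hK : letI := T; IsCompact K)
    (a b : ℝ)
    (σn : ℕ → ℝ → X) (σ : ℝ → X)
    (hσn : ∀ n, IsIsocausalOn T d (σn n) (Set.Icc a b))
    (hσ : IsIsocausalOn T d σ (Set.Icc a b))
    (hσnK : ∀ n, ∀ t ∈ Set.Icc a b, σn n t ∈ K)
    (hσK : ∀ t ∈ Set.Icc a b, σ t ∈ K)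
    (hpt : ∀ t ∈ Set.Icc a b, letI := T;
      Filter.Tendsto (fun n => σn n t) Filter.atTop (𝓝 (σ t))) :
    letI := T
    ∀ U : Set (X × X), IsOpen U → (∀ y ∈ K, (y, y) ∈ U) →
      ∀ᶠ n in Filter.atTop, ∀ t ∈ Set.Icc a b, (σ t, σn n t) ∈ U := by
  let _ := T
  intro U hU hdiag
  by_contra hcon
  set B : Set (ℕ × ℝ) := {i | i.2 ∈ Icc a b ∧ (σ i.2, σn i.1 i.2) ∉ U}
  have hl : (comap Prod.fst atTop ⊓ 𝓟 B).NeBot := by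
    refine inf_principal_neBot_iff.2 fun V hV => ?_
    obtain ⟨N, hN, hNV⟩ := mem_comap.1 hV
    obtain ⟨n, hn, hbad⟩ := frequently_iff.1 (not_eventually.1 hcon) hN
    push Not at hbad
    obtain ⟨t, ht, htU⟩ := hbad
    exact ⟨(n, t), hNV hn, ht, htU⟩
  set F : Ultrafilter (ℕ × ℝ) := Ultrafilter.of (comap Prod.fst atTop ⊓ 𝓟 B)
  have hB : B ∈ F := le_principal_iff.1 ((Ultrafilter.of_le _).trans inf_le_right)
  have htI : ∀ᶠ i in (F : Filter (ℕ × ℝ)), i.2 ∈ Icc a b := mem_of_superset hB fun _ hi => hi.1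
  have hptF : ∀ s ∈ Icc a b, Tendsto (fun i : ℕ × ℝ => σn i.1 s) F (𝓝 (σ s)) := fun s hs =>
    (hpt s hs).comp (tendsto_comap.mono_left ((Ultrafilter.of_le _).trans inf_le_left))
  obtain ⟨t₀, ht₀, ht⟩ := isCompact_Icc.ultrafilter_le_nhds' (F.map Prod.snd) htI
  obtain ⟨y, -, hy⟩ := hK.ultrafilter_le_nhds' (F.map fun i : ℕ × ℝ => σn i.1 i.2)
    (Ultrafilter.mem_map.2 (mem_of_superset hB fun i hi => hσnK i.1 i.2 hi.1))
  have hyσ : y = σ t₀ := eq_of_tendsto_of_causallyMonotoneOn (γn := fun i : ℕ × ℝ => σn i.1)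
    h.2.2.1.1 h.2.2.2 (fun i => (hσn i.1).causallyMonotoneOn) hσ.1 hptF htI ht hy
  have hσt : Tendsto (fun i : ℕ × ℝ => σ i.2) F (𝓝 (σ t₀)) :=
    (hσ.1 t₀ ht₀).tendsto.comp (tendsto_nhdsWithin_iff.2 ⟨ht, htI⟩)
  have hU' : ∀ᶠ i in (F : Filter (ℕ × ℝ)), (σ i.2, σn i.1 i.2) ∈ U :=
    (hσt.prodMk_nhds (hyσ ▸ hy)).eventually (hU.mem_nhds (hdiag _ (hσK t₀ ht₀)))
  obtain ⟨i, hiU, hiB⟩ := (hU'.and hB).exists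
  exact hiB.2 hiU

/-- Pointwise convergence of isocausal curves with values in a compact set `K`
implies convergence uniform with respect to the unique uniform structure
compatible with the compact Hausdorff topology of `K` (whose entourages are the
neighbourhoods of the diagonal). -/
theorem lms_pointwise_implies_uniform
    (T : TopologicalSpace X) (d : X → X → ℝ)
    (h : IsLMS T d) (hcg : CountablyGenerated d)
    (K : Set X) (hK : letI := T; IsCompact K)
    (a b : ℝ) (hab : a ≤ b)
    (σn : ℕ → ℝ → X) (σ : ℝ → X)
    (hσn : ∀ n, IsIsocausalOn T d (σn n) (Set.Icc a b))
    (hσ : IsIsocausalOn T d σ (Set.Icc a b))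
    (hσnK : ∀ n, ∀ t ∈ Set.Icc a b, σn n t ∈ K)
    (hσK : ∀ t ∈ Set.Icc a b, σ t ∈ K)
    (hpt : ∀ t ∈ Set.Icc a b, letI := T;
      Filter.Tendsto (fun n => σn n t) Filter.atTop (𝓝 (σ t))) :
    letI := T
    ∀ U : Set (X × X), IsOpen U → (∀ y ∈ K, (y, y) ∈ U) →
      ∀ᶠ n in Filter.atTop, ∀ t ∈ Set.Icc a b, (σ t, σn n t) ∈ U :=
  lms_pointwise_implies_uniform_general T d h K hK a b σn σ hσn hσ hσnK hσK hpt
end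

section
/- Let (X,d) be a Lorentzian metric space, and let σₙ : [0,1] → X and σ : [0,1] → X be isocausal curves such that σₙ(t) → σ(t) for every t ∈ [0,1]. Then limsup_{n→∞} L(σₙ) ≤ L(σ), where L(γ) := inf { Σ_{i=0}^{k-1} d(γ(tᵢ), γ(tᵢ₊₁)) : 0 = t₀ < t₁ < ⋯ < t_k = 1 } is the Lorentzian length. -/
open Filter Topology Set

variable {X : Type*}

/-- The Lorentzian length of a curve `σ : [0,1] → X`: the infimum over finite
partitions `0 = t₀ < t₁ < ⋯ < t_k = 1` of `Σᵢ d(σ(tᵢ), σ(tᵢ₊₁))`. -/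
noncomputable def Llength (d : X → X → ℝ) (σ : ℝ → X) : ℝ :=
  sInf {s : ℝ | ∃ (k : ℕ) (t : ℕ → ℝ), 0 < k ∧ t 0 = 0 ∧ t k = 1 ∧
    (∀ i, i < k → t i < t (i + 1)) ∧
    s = ∑ i ∈ Finset.range k, d (σ (t i)) (σ (t (i + 1)))}

/-!
For a fixed partition `t` of `[0,1]`, the partition sum `Σᵢ d(γ(tᵢ), γ(tᵢ₊₁))` depends
continuously on the finitely many values `γ(tᵢ)`, because `d` is continuous. Hence the
partition sums of `σₙ` converge to that of `σ`, and since `L(σₙ)` is bounded by them,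
`limsup L(σₙ)` is bounded by every partition sum of `σ`, hence by their infimum `L(σ)`:
as an infimum of continuous functionals, the length is upper semicontinuous.
-/

section LorentzianLength

def IsUnitIntervalPartition (k : ℕ) (t : ℕ → ℝ) : Prop :=
  0 < k ∧ t 0 = 0 ∧ t k = 1 ∧ ∀ i < k, t i < t (i + 1)

def partitionSum (d : X → X → ℝ) (γ : ℝ → X) (k : ℕ) (t : ℕ → ℝ) : ℝ :=
  ∑ i ∈ Finset.range k, d (γ (t i)) (γ (t (i + 1)))

lemma isUnitIntervalPartition_one_natCast : IsUnitIntervalPartition 1 (fun i => (i : ℝ)) :=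
  ⟨one_pos, Nat.cast_zero, Nat.cast_one, fun i _ => by simp⟩

lemma IsUnitIntervalPartition.mem_Icc {k : ℕ} {t : ℕ → ℝ} (hp : IsUnitIntervalPartition k t)
    {i : ℕ} (hi : i ≤ k) : t i ∈ Icc (0 : ℝ) 1 := by
  obtain ⟨-, h0, h1, hlt⟩ := hp
  have hmono : MonotoneOn t (Iic k) :=
    (strictMonoOn_Iic_of_lt_succ fun m hm => by simpa using hlt m hm).monotoneOn
  exact ⟨h0 ▸ hmono (Nat.zero_le k) hi (Nat.zero_le i), h1 ▸ hmono hi (mem_Iic.2 le_rfl) hi⟩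

variable {d : X → X → ℝ}

lemma partitionSum_nonneg (hd : ∀ x y, 0 ≤ d x y) (γ : ℝ → X) (k : ℕ) (t : ℕ → ℝ) :
    0 ≤ partitionSum d γ k t :=
  Finset.sum_nonneg fun _ _ => hd _ _

lemma Llength_le_partitionSum (hd : ∀ x y, 0 ≤ d x y) (γ : ℝ → X) {k : ℕ} {t : ℕ → ℝ}
    (hp : IsUnitIntervalPartition k t) : Llength d γ ≤ partitionSum d γ k t := by
  obtain ⟨hk, h0, h1, hlt⟩ := hp
  refine csInf_le ⟨0, ?_⟩ ⟨k, t, hk, h0, h1, hlt, rfl⟩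
  rintro _ ⟨k', t', -, -, -, -, rfl⟩
  exact partitionSum_nonneg hd γ k' t'

lemma coe_Llength_eq_iInf (hd : ∀ x y, 0 ≤ d x y) (γ : ℝ → X) :
    (Llength d γ : EReal) =
      ⨅ (k : ℕ) (t : ℕ → ℝ) (_ : IsUnitIntervalPartition k t), (partitionSum d γ k t : EReal) := by
  refine le_antisymm (le_iInf fun k => le_iInf₂ fun t hp =>
    EReal.coe_le_coe (Llength_le_partitionSum hd γ hp)) ?_
  rw [Llength, EReal.coe_strictMono.monotone.map_csInf_of_continuousAt
    continuous_coe_real_ereal.continuousAt ?nonempty ?bddBelow]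
  case nonempty =>
    obtain ⟨hk, h0, h1, hlt⟩ := isUnitIntervalPartition_one_natCast
    exact ⟨_, 1, _, hk, h0, h1, hlt, rfl⟩
  case bddBelow =>
    refine ⟨0, ?_⟩
    rintro _ ⟨k, t, -, -, -, -, rfl⟩
    exact partitionSum_nonneg hd γ k t
  refine le_sInf ?_
  rintro _ ⟨_, ⟨k, t, hk, h0, h1, hlt, rfl⟩, rfl⟩
  exact (iInf_le _ k).trans (iInf₂_le t ⟨hk, h0, h1, hlt⟩)

variable [TopologicalSpace X]

lemma tendsto_partitionSum (hd : Continuous fun p : X × X => d p.1 p.2) {ι : Type*}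
    {l : Filter ι} {γs : ι → ℝ → X} {γ : ℝ → X} {k : ℕ} {t : ℕ → ℝ}
    (hγ : ∀ i ≤ k, Tendsto (fun n => γs n (t i)) l (𝓝 (γ (t i)))) :
    Tendsto (fun n => partitionSum d (γs n) k t) l (𝓝 (partitionSum d γ k t)) :=
  tendsto_finsetSum _ fun i hi =>
    have hik : i < k := Finset.mem_range.mp hi
    (hd.tendsto _).comp ((hγ i hik.le).prodMk_nhds (hγ (i + 1) hik))

end LorentzianLength

theorem lms_length_upper_semicontinuous_general
    (T : TopologicalSpace X) (d : X → X → ℝ) (h : IsLMS T d)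
    (σn : ℕ → ℝ → X) (σ : ℝ → X)
    (hpt : ∀ t ∈ Set.Icc (0 : ℝ) 1, letI := T;
      Filter.Tendsto (fun n => σn n t) Filter.atTop (𝓝 (σ t))) :
    Filter.limsup (fun n => (Llength d (σn n) : EReal)) Filter.atTop
      ≤ (Llength d σ : EReal) := by
  let _ : TopologicalSpace X := T
  obtain ⟨hd_nonneg, -, ⟨hd_cont, -⟩, -⟩ := h
  rw [coe_Llength_eq_iInf hd_nonneg]
  refine le_iInf fun k => le_iInf₂ fun t hp => ?_
  have hsum := tendsto_partitionSum hd_cont (γs := σn) fun i hi => hpt _ (hp.mem_Icc hi)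
  calc limsup (fun n => (Llength d (σn n) : EReal)) atTop
      ≤ limsup (fun n => (partitionSum d (σn n) k t : EReal)) atTop :=
        limsup_le_limsup (.of_forall fun n =>
          EReal.coe_le_coe (Llength_le_partitionSum hd_nonneg _ hp))
    _ = partitionSum d σ k t := (EReal.tendsto_coe.2 hsum).limsup_eq

/-- Upper semi-continuity of the Lorentzian length functional: if isocausal
curves `σₙ` converge pointwise to the isocausal curve `σ`, then
`limsup L(σₙ) ≤ L(σ)`. -/
theorem lms_length_upper_semicontinuous
    (T : TopologicalSpace X) (d : X → X → ℝ) (h : IsLMS T d)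
    (σn : ℕ → ℝ → X) (σ : ℝ → X)
    (hσn : ∀ n, IsIsocausalOn T d (σn n) (Set.Icc 0 1))
    (hσ : IsIsocausalOn T d σ (Set.Icc 0 1))
    (hpt : ∀ t ∈ Set.Icc (0 : ℝ) 1, letI := T;
      Filter.Tendsto (fun n => σn n t) Filter.atTop (𝓝 (σ t))) :
    Filter.limsup (fun n => (Llength d (σn n) : EReal)) Filter.atTop
      ≤ (Llength d σ : EReal) :=
  lms_length_upper_semicontinuous_general T d h σn σ hpt
end

section
/- Let (X,d) be a countably generated Lorentzian metric space and let (x_n)_{n≥1} be a sequence that is dense in X. Then the function τ(x) = Σ_{n=1}^∞ 2^{−n} ( d(x_n, x)/(1 + d(x_n, x)) − d(x, x_n)/(1 + d(x, x_n)) ) is well defined with values in [−1,1], continuous, and is a time function: x < y implies τ(x) < τ(y). -/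
/-!
Since `t ↦ t / (1 + t)` is increasing on `[0, ∞)`, every summand is monotone along `J`, and
it is bounded by `1`, so the series converges uniformly against `∑ 2⁻ⁿ⁻¹ = 1`. If `x < y`,
the points `z` with `d z x < d z y` or `d y z < d x z` form an open set, nonempty because
`d` distinguishes points; the dense sequence meets it, which makes one summand strictly
increase.
-/

open Filter Topology Set

variable {X : Type*}

lemma strictMonoOn_div_one_add_self : StrictMonoOn (fun t : ℝ => t / (1 + t)) (Ici 0) := by
  intro a ha b hb hab
  simp only [mem_Ici] at ha hb
  rw [div_lt_div_iff₀ (by linarith) (by linarith)]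
  linarith

lemma div_one_add_self_mem_Ico {t : ℝ} (ht : 0 ≤ t) : t / (1 + t) ∈ Ico 0 1 :=
  ⟨div_nonneg ht (by linarith), (div_lt_one (by linarith)).2 (by linarith)⟩

section WeightedSeries

lemma hasSum_inv_two_pow_succ : HasSum (fun n : ℕ => (2⁻¹ : ℝ) ^ (n + 1)) 1 := by
  convert hasSum_geometric_two' (1 : ℝ) using 1
  ext n
  rw [pow_succ, inv_pow]
  ring

lemma norm_inv_two_pow_succ_mul_le {a : ℝ} (ha : |a| ≤ 1) (n : ℕ) :
    ‖(2⁻¹ : ℝ) ^ (n + 1) * a‖ ≤ (2⁻¹ : ℝ) ^ (n + 1) := by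
  rw [Real.norm_eq_abs, abs_mul, abs_of_pos (by positivity)]
  exact mul_le_of_le_one_right (by positivity) ha

variable {f g : ℕ → ℝ}

lemma summable_inv_two_pow_succ_mul (hf : ∀ n, |f n| ≤ 1) :
    Summable fun n => (2⁻¹ : ℝ) ^ (n + 1) * f n :=
  hasSum_inv_two_pow_succ.summable.of_norm_bounded fun n => norm_inv_two_pow_succ_mul_le (hf n) n

lemma tsum_inv_two_pow_succ_mul_mem_Icc (hf : ∀ n, |f n| ≤ 1) :
    ∑' n, (2⁻¹ : ℝ) ^ (n + 1) * f n ∈ Icc (-1) 1 := by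
  rw [mem_Icc, ← abs_le, ← Real.norm_eq_abs]
  exact tsum_of_norm_bounded hasSum_inv_two_pow_succ fun n =>
    norm_inv_two_pow_succ_mul_le (hf n) n

lemma tsum_inv_two_pow_succ_mul_lt (hf : ∀ n, |f n| ≤ 1) (hg : ∀ n, |g n| ≤ 1)
    (hle : ∀ n, f n ≤ g n) {m : ℕ} (hlt : f m < g m) :
    ∑' n, (2⁻¹ : ℝ) ^ (n + 1) * f n < ∑' n, (2⁻¹ : ℝ) ^ (n + 1) * g n :=
  Summable.tsum_lt_tsum (fun n => mul_le_mul_of_nonneg_left (hle n) (by positivity))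
    (mul_lt_mul_of_pos_left hlt (by positivity))
    (summable_inv_two_pow_succ_mul hf) (summable_inv_two_pow_succ_mul hg)

lemma continuous_tsum_inv_two_pow_succ_mul [TopologicalSpace X] {F : ℕ → X → ℝ}
    (hF : ∀ n, Continuous (F n)) (hF1 : ∀ n x, |F n x| ≤ 1) :
    Continuous fun x => ∑' n, (2⁻¹ : ℝ) ^ (n + 1) * F n x :=
  continuous_tsum (fun n => continuous_const.mul (hF n)) hasSum_inv_two_pow_succ.summable
    fun n x => norm_inv_two_pow_succ_mul_le (hF1 n x) n

end WeightedSeries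

section TimeTerm

variable {d : X → X → ℝ}

noncomputable def timeTerm (d : X → X → ℝ) (p x : X) : ℝ :=
  d p x / (1 + d p x) - d x p / (1 + d x p)

lemma abs_timeTerm_le_one (hd : ∀ x y, 0 ≤ d x y) (p x : X) : |timeTerm d p x| ≤ 1 := by
  have h₁ := div_one_add_self_mem_Ico (hd p x)
  have h₂ := div_one_add_self_mem_Ico (hd x p)
  rw [timeTerm, abs_le]
  constructor <;> linarith [h₁.1, h₁.2, h₂.1, h₂.2]

lemma continuous_timeTerm [TopologicalSpace X] (hd : ∀ x y, 0 ≤ d x y)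
    (hc : Continuous fun q : X × X => d q.1 q.2) (p : X) : Continuous (timeTerm d p) := by
  have h₁ : Continuous fun x => d p x := hc.comp (continuous_const.prodMk continuous_id)
  have h₂ : Continuous fun x => d x p := hc.comp (continuous_id.prodMk continuous_const)
  have hpos (a b : X) : 1 + d a b ≠ 0 := (add_pos_of_pos_of_nonneg one_pos (hd a b)).ne'
  exact (h₁.div (continuous_const.add h₁) fun x => hpos p x).sub
    (h₂.div (continuous_const.add h₂) fun x => hpos x p)

lemma timeTerm_le_of_jrel (hd : ∀ x y, 0 ≤ d x y) {x y : X} (hxy : Jrel d x y) (p : X) :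
    timeTerm d p x ≤ timeTerm d p y := by
  have h₁ := strictMonoOn_div_one_add_self.monotoneOn (hd p x) (hd p y) (hxy p).1
  have h₂ := strictMonoOn_div_one_add_self.monotoneOn (hd y p) (hd x p) (hxy p).2
  simp only [timeTerm] at h₁ h₂ ⊢
  linarith

lemma timeTerm_lt_of_jrel (hd : ∀ x y, 0 ≤ d x y) {x y p : X} (hxy : Jrel d x y)
    (hp : d p x < d p y ∨ d y p < d x p) : timeTerm d p x < timeTerm d p y := by
  have h₁ := strictMonoOn_div_one_add_self.monotoneOn (hd p x) (hd p y) (hxy p).1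
  have h₂ := strictMonoOn_div_one_add_self.monotoneOn (hd y p) (hd x p) (hxy p).2
  simp only [timeTerm] at h₁ h₂ ⊢
  rcases hp with hp | hp
  · linarith [strictMonoOn_div_one_add_self (hd p x) (hd p y) hp]
  · linarith [strictMonoOn_div_one_add_self (hd y p) (hd x p) hp]

lemma CausalLt.exists_lt
    (hsep : ∀ x y : X, x ≠ y → ∃ z, d x z ≠ d y z ∨ d z x ≠ d z y) {x y : X}
    (hxy : CausalLt d x y) : ∃ z, d z x < d z y ∨ d y z < d x z := by
  obtain ⟨z, hz | hz⟩ := hsep x y hxy.2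
  · exact ⟨z, Or.inr ((hxy.1 z).2.lt_of_ne' hz)⟩
  · exact ⟨z, Or.inl ((hxy.1 z).1.lt_of_ne hz)⟩

lemma CausalLt.exists_dense_seq_lt [TopologicalSpace X]
    (hc : Continuous fun q : X × X => d q.1 q.2)
    (hsep : ∀ x y : X, x ≠ y → ∃ z, d x z ≠ d y z ∨ d z x ≠ d z y)
    {x_ : ℕ → X} (hdense : Dense (range x_)) {x y : X} (hxy : CausalLt d x y) :
    ∃ n, d (x_ n) x < d (x_ n) y ∨ d y (x_ n) < d x (x_ n) := by
  have hleft (a : X) : Continuous fun w => d w a :=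
    hc.comp (continuous_id.prodMk continuous_const)
  have hright (a : X) : Continuous fun w => d a w :=
    hc.comp (continuous_const.prodMk continuous_id)
  have hopen : IsOpen {w | d w x < d w y ∨ d y w < d x w} :=
    (isOpen_lt (hleft x) (hleft y)).union (isOpen_lt (hright y) (hright x))
  obtain ⟨_, ⟨n, rfl⟩, hn⟩ := hdense.exists_mem_open hopen (hxy.exists_lt hsep)
  exact ⟨n, hn⟩

end TimeTerm

theorem lms_explicit_time_function_general
    (T : TopologicalSpace X) (d : X → X → ℝ)
    (h : IsLMS T d)
    (x_ : ℕ → X) (hdense : letI := T; Dense (Set.range x_)) :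
    (∀ x : X, Summable fun n : ℕ =>
      ((2 : ℝ)⁻¹) ^ (n + 1) *
        (d (x_ n) x / (1 + d (x_ n) x) - d x (x_ n) / (1 + d x (x_ n)))) ∧
    (∀ x : X,
      (∑' n : ℕ, ((2 : ℝ)⁻¹) ^ (n + 1) *
        (d (x_ n) x / (1 + d (x_ n) x) - d x (x_ n) / (1 + d x (x_ n))))
        ∈ Set.Icc (-1 : ℝ) 1) ∧
    (letI := T; Continuous fun x : X =>
      ∑' n : ℕ, ((2 : ℝ)⁻¹) ^ (n + 1) *
        (d (x_ n) x / (1 + d (x_ n) x) - d x (x_ n) / (1 + d x (x_ n)))) ∧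
    (∀ x y : X, CausalLt d x y →
      (∑' n : ℕ, ((2 : ℝ)⁻¹) ^ (n + 1) *
        (d (x_ n) x / (1 + d (x_ n) x) - d x (x_ n) / (1 + d x (x_ n)))) <
      (∑' n : ℕ, ((2 : ℝ)⁻¹) ^ (n + 1) *
        (d (x_ n) y / (1 + d (x_ n) y) - d y (x_ n) / (1 + d y (x_ n))))) := by
  obtain ⟨hd, -, ⟨hc, -⟩, hsep⟩ := h
  let := T
  have hbound (x : X) (n : ℕ) : |timeTerm d (x_ n) x| ≤ 1 := abs_timeTerm_le_one hd (x_ n) x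
  refine ⟨fun x => summable_inv_two_pow_succ_mul (hbound x),
    fun x => tsum_inv_two_pow_succ_mul_mem_Icc (hbound x),
    continuous_tsum_inv_two_pow_succ_mul (fun n => continuous_timeTerm hd hc (x_ n))
      (fun n x => hbound x n), fun x y hxy => ?_⟩
  obtain ⟨m, hm⟩ := hxy.exists_dense_seq_lt hc hsep hdense
  exact tsum_inv_two_pow_succ_mul_lt (hbound x) (hbound y)
    (fun n => timeTerm_le_of_jrel hd hxy.1 (x_ n)) (timeTerm_lt_of_jrel hd hxy.1 hm)

/-- The explicit series built from a dense sequence in a countably generated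
Lorentzian metric space is well defined (summable) with values in `[-1,1]`,
continuous, and a time function. -/
theorem lms_explicit_time_function
    (T : TopologicalSpace X) (d : X → X → ℝ)
    (h : IsLMS T d) (hcg : CountablyGenerated d)
    (x_ : ℕ → X) (hdense : letI := T; Dense (Set.range x_)) :
    (∀ x : X, Summable fun n : ℕ =>
      ((2 : ℝ)⁻¹) ^ (n + 1) *
        (d (x_ n) x / (1 + d (x_ n) x) - d x (x_ n) / (1 + d x (x_ n)))) ∧
    (∀ x : X,
      (∑' n : ℕ, ((2 : ℝ)⁻¹) ^ (n + 1) *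
        (d (x_ n) x / (1 + d (x_ n) x) - d x (x_ n) / (1 + d x (x_ n))))
        ∈ Set.Icc (-1 : ℝ) 1) ∧
    (letI := T; Continuous fun x : X =>
      ∑' n : ℕ, ((2 : ℝ)⁻¹) ^ (n + 1) *
        (d (x_ n) x / (1 + d (x_ n) x) - d x (x_ n) / (1 + d x (x_ n)))) ∧
    (∀ x y : X, CausalLt d x y →
      (∑' n : ℕ, ((2 : ℝ)⁻¹) ^ (n + 1) *
        (d (x_ n) x / (1 + d (x_ n) x) - d x (x_ n) / (1 + d x (x_ n)))) <
      (∑' n : ℕ, ((2 : ℝ)⁻¹) ^ (n + 1) *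
        (d (x_ n) y / (1 + d (x_ n) y) - d y (x_ n) / (1 + d y (x_ n))))) :=
  lms_explicit_time_function_general T d h x_ hdense
end
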